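/- arXiv:math/0405327 — 5 statements merged into one kernel-verified Lean document; each statement's English description precedes it below -/
import Mathlib

section
/- Let (M,c) be a conformal manifold of dimension m with a nondegenerate distribution V of codimension n, H = V^⊥. For each local representative g of c define α^g = (1/(m−n)) tr_g(B^V)^♭ + (1/n) tr_g(B^H)^♭. Then under a conformal change g ↦ g λ^{-2}, α^{gλ^{-2}} = α^g + λ^{-1} dλ; consequently the family {α^g} defines a Weyl connection D on (M,c), and V and H are both minimal with respect to D; moreover D is the unique Weyl connection on (M,c) for which both V and H are minimal. -/
noncomputable section
open scoped BigOperators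

/-- Points of the model chart `ℝ^n`. -/
abbrev Pt (n : ℕ) := EuclideanSpace ℝ (Fin n)
/-- A linear connection, given by its Christoffel tensor relative to the flat chart. -/
abbrev Conn (n : ℕ) := Pt n → Pt n →ₗ[ℝ] Pt n →ₗ[ℝ] Pt n
/-- A (pseudo-Riemannian) metric on the chart. -/
abbrev Met (n : ℕ) := Pt n → Pt n →ₗ[ℝ] Pt n →ₗ[ℝ] ℝ

def TorsionFree {n : ℕ} (Γ : Conn n) : Prop := ∀ x u v, Γ x u v = Γ x v u
def MetSymm {n : ℕ} (g : Met n) : Prop := ∀ x u v, g x u v = g x v u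
def MetPos {n : ℕ} (g : Met n) : Prop := ∀ x v, v ≠ 0 → 0 < g x v v
/-- The covariant derivative `(D_u g)(v, w)` of the metric. -/
def covMet {n : ℕ} (g : Met n) (Γ : Conn n) (x u v w : Pt n) : ℝ :=
  fderiv ℝ (fun p => g p v w) x u - g x (Γ x u v) w - g x v (Γ x u w)
/-- Levi-Civita connection: torsion-free and metric. -/
def IsLeviCivita {n : ℕ} (g : Met n) (Γ : Conn n) : Prop :=
  TorsionFree Γ ∧ ∀ x u v w, covMet g Γ x u v w = 0
/-- Weyl connection for the conformal class of `g`, with Lee form `α` w.r.t. `g`: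
`D g = -2 α ⊗ g`. -/
def IsWeyl {n : ℕ} (g : Met n) (Γ : Conn n) (α : Pt n → Pt n → ℝ) : Prop :=
  TorsionFree Γ ∧ ∀ x u v w, covMet g Γ x u v w = -2 * α x u * g x v w
/-- Covariant derivative `D_X Y` of vector fields. -/
def covVF {n : ℕ} (Γ : Conn n) (X Y : Pt n → Pt n) : Pt n → Pt n :=
  fun x => fderiv ℝ Y x (X x) + Γ x (X x) (Y x)
/-- The Hessian `(D df)(u, v)` of a function w.r.t. a connection. -/
def hessian {n : ℕ} (Γ : Conn n) (f : Pt n → ℝ) (x u v : Pt n) : ℝ :=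
  fderiv ℝ (fun p => fderiv ℝ f p v) x u - fderiv ℝ f x (Γ x u v)
/-- A `g`-orthonormal frame. -/
def OrthFrame {n : ℕ} (g : Met n) (e : Fin n → Pt n → Pt n) : Prop :=
  ∀ x i j, g x (e i x) (e j x) = if i = j then (1 : ℝ) else 0
/-- The Lie bracket of vector fields. -/
def lieB {n : ℕ} (X Y : Pt n → Pt n) : Pt n → Pt n :=
  fun x => fderiv ℝ Y x (X x) - fderiv ℝ X x (Y x)
/-- The Laplacian `tr_g (D df)` computed in the `g`-orthonormal frame `e`. -/
def lap {n : ℕ} (Γ : Conn n) (e : Fin n → Pt n → Pt n) (f : Pt n → ℝ) (x : Pt n) : ℝ :=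
  ∑ i, hessian Γ f x (e i x) (e i x)
/-- The second fundamental form `(D dφ)(u, v)` of a map `φ`. -/
def sff {m n : ℕ} (ΓM : Conn m) (ΓN : Conn n) (φ : Pt m → Pt n) (x u v : Pt m) : Pt n :=
  fderiv ℝ (fun p => fderiv ℝ φ p v) x u
    + ΓN (φ x) (fderiv ℝ φ x u) (fderiv ℝ φ x v)
    - fderiv ℝ φ x (ΓM x u v)
/-- The tension field `tr_g (D dφ)` computed in the `g`-orthonormal frame `e`. -/
def tension {m n : ℕ} (ΓM : Conn m) (ΓN : Conn n) (φ : Pt m → Pt n)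
    (e : Fin m → Pt m → Pt m) (x : Pt m) : Pt n :=
  ∑ i, sff ΓM ΓN φ x (e i x) (e i x)
/-- The curvature `R(u, v)w` of a connection. -/
def curv {n : ℕ} (Γ : Conn n) (x u v w : Pt n) : Pt n :=
  fderiv ℝ (fun p => Γ p v w) x u - fderiv ℝ (fun p => Γ p u w) x v
    + Γ x u (Γ x v w) - Γ x v (Γ x u w)
/-- The Ricci tensor `Ric(v, w) = tr (u ↦ R(u, v) w)`. -/
def ricci {n : ℕ} (Γ : Conn n) (x v w : Pt n) : ℝ :=
  ∑ i, (inner ℝ (curv Γ x (EuclideanSpace.single i 1) v w)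
    (EuclideanSpace.single i (1 : ℝ)) : ℝ)
/-- Orthogonal projection onto the span of the (orthonormal) partial frame `v`. -/
def projF {m r : ℕ} (g : Met m) (v : Fin r → Pt m → Pt m) (x u : Pt m) : Pt m :=
  ∑ i, g x u (v i x) • v i x
/-- The covariant derivative `(D_u J)(v)` of an endomorphism field. -/
def DJof {n : ℕ} (Γ : Conn n) (J : Pt n → Pt n →ₗ[ℝ] Pt n) (x u v : Pt n) : Pt n :=
  fderiv ℝ (fun p => J p v) x u + Γ x u (J x v) - J x (Γ x u v)

/-- Auxiliary: a metric admitting a smooth pointwise-spanning "orthonormal-like"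
frame depends differentiably on the point. -/
lemma g_diff {N : ℕ} (g : Met N) (e : Fin N → Pt N → Pt N)
    (hspan' : ∀ x u, u = ∑ k, g x u (e k x) • e k x)
    (hes : ∀ k, ContDiff ℝ (⊤ : ℕ∞) (e k)) :
    ∀ a b : Pt N, Differentiable ℝ (fun p => g p a b) := by
  classical
  set A : Pt N → (Pt N →L[ℝ] Pt N) :=
    fun x => ∑ k, (EuclideanSpace.proj k).smulRight (e k x) with hA
  have hAapp : ∀ x (c : Pt N), A x c = ∑ k, c k • e k x := by
    intro x c
    simp [hA, ContinuousLinearMap.sum_apply]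
  have hAdiff : Differentiable ℝ A := by
    apply Differentiable.fun_sum
    intro k _
    exact (ContinuousLinearMap.smulRightL ℝ (Pt N) (Pt N)
      (EuclideanSpace.proj k)).differentiable.comp ((hes k).differentiable (by simp))
  have hAsurj : ∀ x, Function.Surjective (A x) := by
    intro x u
    refine ⟨WithLp.toLp 2 (fun k => g x u (e k x) : Fin N → ℝ), ?_⟩
    rw [hAapp]
    exact (hspan' x u).symm
  have hAbij : ∀ x, Function.Bijective (A x) := by
    intro x
    have hs := hAsurj x
    have : Function.Injective (A x) := by
      have := (LinearMap.injective_iff_surjective (f := (A x : Pt N →ₗ[ℝ] Pt N))).mpr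
      simpa using this (by simpa using hs)
    exact ⟨this, hs⟩
  have hunit : ∀ x, ∃ u : (Pt N →L[ℝ] Pt N)ˣ, (u : Pt N →L[ℝ] Pt N) = A x := by
    intro x
    let E : Pt N ≃L[ℝ] Pt N :=
      (LinearEquiv.ofBijective (A x : Pt N →ₗ[ℝ] Pt N)
        (by simpa using hAbij x)).toContinuousLinearEquiv
    have hE : ∀ z, E z = A x z := fun z => rfl
    refine ⟨⟨A x, E.symm.toContinuousLinearMap, ?_, ?_⟩, rfl⟩
    · refine ContinuousLinearMap.ext fun u => ?_
      simp only [ContinuousLinearMap.mul_apply, ContinuousLinearMap.one_apply,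
        ContinuousLinearMap.coe_coe, ContinuousLinearEquiv.coe_coe]
      rw [← hE]
      exact E.apply_symm_apply u
    · refine ContinuousLinearMap.ext fun u => ?_
      simp only [ContinuousLinearMap.mul_apply, ContinuousLinearMap.one_apply,
        ContinuousLinearMap.coe_coe, ContinuousLinearEquiv.coe_coe]
      rw [← hE]
      exact E.symm_apply_apply u
  have hRdiff : ∀ x, DifferentiableAt ℝ (fun p => Ring.inverse (A p)) x := by
    intro x
    obtain ⟨u, hu⟩ := hunit x
    have h1 : ContDiffAt ℝ 1 (Ring.inverse : (Pt N →L[ℝ] Pt N) → _) (A x) := by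
      rw [← hu]; exact contDiffAt_ringInverse ℝ u
    exact (h1.differentiableAt one_ne_zero).comp x (hAdiff x)
  have hcoord : ∀ x (a : Pt N) k, (Ring.inverse (A x)) a k = g x a (e k x) := by
    intro x a k
    obtain ⟨u, hu⟩ := hunit x
    have hAinv : A x ((Ring.inverse (A x)) a) = a := by
      rw [← hu, Ring.inverse_unit]
      have h := congrArg (fun (T : Pt N →L[ℝ] Pt N) => T a) (Units.mul_inv u)
      simp only [ContinuousLinearMap.mul_apply, ContinuousLinearMap.one_apply] at h
      exact h
    have hAc : A x (WithLp.toLp 2 (fun k => g x a (e k x) : Fin N → ℝ)) = a := by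
      rw [hAapp]; exact (hspan' x a).symm
    have := (hAbij x).1 (hAinv.trans hAc.symm)
    exact congrArg (fun y : Pt N => y k) this
  have key : ∀ a b x, g x a b
      = ∑ k, ((Ring.inverse (A x)) a k) * ((Ring.inverse (A x)) b k) := by
    intro a b x
    conv_lhs => rw [hspan' x b]
    rw [map_sum]
    congr 1
    ext k
    rw [map_smul, smul_eq_mul, hcoord, hcoord]
    ring
  intro a b x
  have hfun : (fun p => g p a b)
      = fun p => ∑ k, ((Ring.inverse (A p)) a k) * ((Ring.inverse (A p)) b k) :=
    funext fun p => key a b p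
  rw [hfun]
  apply DifferentiableAt.fun_sum
  intro k _
  have hca : DifferentiableAt ℝ (fun p => (Ring.inverse (A p)) a k) x := by
    have h2 : DifferentiableAt ℝ (fun p => (Ring.inverse (A p)) a) x :=
      ((ContinuousLinearMap.apply ℝ (Pt N) a).differentiableAt).comp x (hRdiff x)
    exact ((EuclideanSpace.proj k).differentiableAt).comp x h2
  have hcb : DifferentiableAt ℝ (fun p => (Ring.inverse (A p)) b k) x := by
    have h2 : DifferentiableAt ℝ (fun p => (Ring.inverse (A p)) b) x :=
      ((ContinuousLinearMap.apply ℝ (Pt N) b).differentiableAt).comp x (hRdiff x)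
    exact ((EuclideanSpace.proj k).differentiableAt).comp x h2
  exact hca.mul hcb

/-- Auxiliary: the Koszul formula for a Weyl connection. -/
lemma koszul {N : ℕ} (g : Met N) (hgs : MetSymm g) (Γ : Conn N)
    (α : Pt N → Pt N → ℝ) (htf : TorsionFree Γ)
    (hW : ∀ x u v w, covMet g Γ x u v w = -2 * α x u * g x v w) :
    ∀ x u v w, 2 * g x (Γ x u v) w =
      fderiv ℝ (fun p => g p v w) x u + fderiv ℝ (fun p => g p u w) x v
        - fderiv ℝ (fun p => g p u v) x w
      + 2 * (α x u * g x v w + α x v * g x u w - α x w * g x u v) := by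
  intro x u v w
  have E1 := hW x u v w
  have E2 := hW x v u w
  have E3 := hW x w u v
  simp only [covMet] at E1 E2 E3
  rw [show Γ x v u = Γ x u v from htf x v u] at E2
  rw [show Γ x w u = Γ x u w from htf x w u] at E3
  rw [show Γ x w v = Γ x v w from htf x w v] at E3
  rw [show g x (Γ x u w) v = g x v (Γ x u w) from hgs x _ _] at E3
  rw [show g x u (Γ x v w) = g x (Γ x v w) u from hgs x _ _] at E2
  rw [show g x u (Γ x v w) = g x (Γ x v w) u from hgs x _ _] at E3
  linear_combination -E1 - E2 + E3

set_option maxHeartbeats 2000000 in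
/-- The minimal Weyl connection of `(M, c, V)`: the 1-form
`α^g = (1/(m−n)) tr_g(B^V)^♭ + (1/n) tr_g(B^H)^♭` transforms as a Lee form under
conformal changes `g ↦ λ⁻² g`; hence it defines a Weyl connection `D` on `(M, c)` for
which both `V` and `H` are minimal, and `D` is the unique such Weyl connection. -/
theorem stmt11 (m n r : ℕ) (hr : r + n = m) (hr0 : 0 < r) (hn0 : 0 < n)
    (g : Met m) (hgs : MetSymm g) (hgp : MetPos g)
    (v : Fin r → Pt m → Pt m) (w : Fin n → Pt m → Pt m)
    (hv : ∀ x i j, g x (v i x) (v j x) = if i = j then (1 : ℝ) else 0)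
    (hw : ∀ x i j, g x (w i x) (w j x) = if i = j then (1 : ℝ) else 0)
    (hvw : ∀ x i j, g x (v i x) (w j x) = 0)
    (hspan : ∀ x u, u = (∑ i, g x u (v i x) • v i x) + ∑ j, g x u (w j x) • w j x)
    (hvs : ∀ i, ContDiff ℝ (⊤ : ℕ∞) (v i)) (hws : ∀ j, ContDiff ℝ (⊤ : ℕ∞) (w j))
    (Lg : Conn m) (hLg : IsLeviCivita g Lg)
    (l : Pt m → ℝ) (hl : ∀ x, 0 < l x) (hls : ContDiff ℝ (⊤ : ℕ∞) l)
    (gt : Met m) (hgt : ∀ x, gt x = (l x ^ 2)⁻¹ • g x)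
    (Lgt : Conn m) (hLgt : IsLeviCivita gt Lgt)
    (vt : Fin r → Pt m → Pt m) (hvt : ∀ i x, vt i x = l x • v i x)
    (wt : Fin n → Pt m → Pt m) (hwt : ∀ j x, wt j x = l x • w j x)
    (αg : Pt m → Pt m → ℝ)
    (hαg : ∀ x u, αg x u
      = ((r : ℝ))⁻¹ * g x (∑ i, (covVF Lg (v i) (v i) x
            - projF g v x (covVF Lg (v i) (v i) x))) u
        + ((n : ℝ))⁻¹ * g x (∑ j, projF g v x (covVF Lg (w j) (w j) x)) u)
    (αgt : Pt m → Pt m → ℝ)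
    (hαgt : ∀ x u, αgt x u
      = ((r : ℝ))⁻¹ * gt x (∑ i, (covVF Lgt (vt i) (vt i) x
            - projF gt vt x (covVF Lgt (vt i) (vt i) x))) u
        + ((n : ℝ))⁻¹ * gt x (∑ j, projF gt vt x (covVF Lgt (wt j) (wt j) x)) u) :
    (∀ x u, αgt x u = αg x u + (l x)⁻¹ * fderiv ℝ l x u) ∧
    ∃ Γd : Conn m, IsWeyl g Γd αg ∧
      (∀ x, (∑ i, (covVF Γd (v i) (v i) x - projF g v x (covVF Γd (v i) (v i) x))) = 0) ∧
      (∀ x, (∑ j, projF g v x (covVF Γd (w j) (w j) x)) = 0) ∧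
      ∀ (Γ' : Conn m) (α' : Pt m → Pt m → ℝ), IsWeyl g Γ' α' →
        (∀ x, (∑ i, (covVF Γ' (v i) (v i) x - projF g v x (covVF Γ' (v i) (v i) x))) = 0) →
        (∀ x, (∑ j, projF g v x (covVF Γ' (w j) (w j) x)) = 0) →
        Γ' = Γd := by
  classical
  subst hr
  have hln : ∀ x, l x ≠ 0 := fun x => (hl x).ne'
  have hl2 : ∀ x, l x ^ 2 ≠ 0 := fun x => pow_ne_zero _ (hln x)
  have hld : Differentiable ℝ l := hls.differentiable (by simp)
  have hrne : (r : ℝ) ≠ 0 := Nat.cast_ne_zero.mpr hr0.ne'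
  have hnne : (n : ℝ) ≠ 0 := Nat.cast_ne_zero.mpr hn0.ne'
  -- the combined frame
  set e : Fin (r + n) → Pt (r + n) → Pt (r + n) :=
    fun k x => Fin.addCases (fun i => v i x) (fun j => w j x) k with he
  have hspan' : ∀ x u, u = ∑ k, g x u (e k x) • e k x := by
    intro x u
    rw [Fin.sum_univ_add]
    simp only [he, Fin.addCases_left, Fin.addCases_right]
    exact hspan x u
  have hes : ∀ k, ContDiff ℝ (⊤ : ℕ∞) (e k) := by
    intro k
    refine Fin.addCases (motive := fun k => ContDiff ℝ (⊤ : ℕ∞) (e k)) ?_ ?_ k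
    · intro i; simpa [he] using hvs i
    · intro j; simpa [he] using hws j
  have hgd : ∀ a b, Differentiable ℝ (fun p => g p a b) := g_diff g e hspan' hes
  -- nondegeneracy
  have ndg : ∀ x (y : Pt (r + n)), (∀ z, g x y z = 0) → y = 0 := by
    intro x y h
    conv_lhs => rw [hspan x y]
    simp [h]
  -- gt facts
  have hgtapp : ∀ x a b, gt x a b = (l x ^ 2)⁻¹ * g x a b := by
    intro x a b; rw [hgt]; simp
  have hgts : MetSymm gt := by
    intro x a b; rw [hgtapp, hgtapp, hgs x a b]
  set τ : Pt (r + n) → Pt (r + n) → ℝ := fun x z => (l x)⁻¹ * fderiv ℝ l x z with hτ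
  set T : Pt (r + n) → Pt (r + n) :=
    fun x => (∑ i, τ x (v i x) • v i x) + ∑ j, τ x (w j x) • w j x with hT
  have hgT : ∀ x z, g x (T x) z = τ x z := by
    intro x z
    have hdlz : fderiv ℝ l x z
        = (∑ i, g x z (v i x) * fderiv ℝ l x (v i x))
          + ∑ j, g x z (w j x) * fderiv ℝ l x (w j x) := by
      conv_lhs => rw [hspan x z]
      simp [smul_eq_mul]
    have h1 : g x (T x) z
        = (∑ i, τ x (v i x) * g x (v i x) z) + ∑ j, τ x (w j x) * g x (w j x) z := by
      rw [hT]
      simp [smul_eq_mul]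
    rw [h1, hτ]
    simp only []
    rw [hdlz]
    rw [mul_add, Finset.mul_sum, Finset.mul_sum]
    congr 1
    · refine Finset.sum_congr rfl fun i _ => ?_
      rw [hgs x (v i x) z]; ring
    · refine Finset.sum_congr rfl fun j _ => ?_
      rw [hgs x (w j x) z]; ring
  -- Koszul for g and gt
  have hKg : ∀ x u' v' w', 2 * g x (Lg x u' v') w' =
      fderiv ℝ (fun p => g p v' w') x u' + fderiv ℝ (fun p => g p u' w') x v'
        - fderiv ℝ (fun p => g p u' v') x w' := by
    intro x u' v' w'
    have := koszul g hgs Lg (fun _ _ => 0) hLg.1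
      (by intro x u v w; rw [hLg.2]; ring) x u' v' w'
    linarith [this]
  have hKgt : ∀ x u' v' w', 2 * gt x (Lgt x u' v') w' =
      fderiv ℝ (fun p => gt p v' w') x u' + fderiv ℝ (fun p => gt p u' w') x v'
        - fderiv ℝ (fun p => gt p u' v') x w' := by
    intro x u' v' w'
    have := koszul gt hgts Lgt (fun _ _ => 0) hLgt.1
      (by intro x u v w; rw [hLgt.2]; ring) x u' v' w'
    linarith [this]
  -- derivative of gt
  have hDgt : ∀ x u' a b, fderiv ℝ (fun p => gt p a b) x u'
      = (l x ^ 2)⁻¹ * (fderiv ℝ (fun p => g p a b) x u' - 2 * τ x u' * g x a b) := by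
    intro x u' a b
    have hfun : (fun p => gt p a b) = fun p => (l p * l p)⁻¹ * g p a b := by
      funext p
      rw [hgtapp, sq]
    rw [hfun]
    have hglx : DifferentiableAt ℝ (fun p => g p a b) x := hgd a b x
    have hlsq : HasFDerivAt (fun p => l p * l p)
        (l x • fderiv ℝ l x + l x • fderiv ℝ l x) x :=
      ((hld x).hasFDerivAt).mul ((hld x).hasFDerivAt)
    have hmm : l x * l x ≠ 0 := mul_ne_zero (hln x) (hln x)
    have hinv : HasFDerivAt (fun p => (l p * l p)⁻¹)
        ((ContinuousLinearMap.smulRight (1 : ℝ →L[ℝ] ℝ)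
            (-((l x * l x) ^ 2)⁻¹)).comp (l x • fderiv ℝ l x + l x • fderiv ℝ l x)) x :=
      (hasFDerivAt_inv hmm).comp x hlsq
    have hmul := hinv.mul hglx.hasFDerivAt
    rw [show (fun p => (l p * l p)⁻¹ * g p a b) = (fun p => (l p * l p)⁻¹) * (fun p => g p a b) from rfl, hmul.fderiv]
    simp only [ContinuousLinearMap.add_apply, ContinuousLinearMap.smul_apply,
      ContinuousLinearMap.comp_apply, ContinuousLinearMap.smulRight_apply,
      ContinuousLinearMap.one_apply, smul_eq_mul, hτ]
    field_simp [hln x]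
    ring
  -- the conformal change of the Levi-Civita connection
  have hLgtEq : ∀ x p q, Lgt x p q
      = Lg x p q - τ x p • q - τ x q • p + g x p q • T x := by
    intro x p q
    have hpair : ∀ z, g x (Lgt x p q) z
        = g x (Lg x p q) z - τ x p * g x q z - τ x q * g x p z + τ x z * g x p q := by
      intro z
      have h1 := hKgt x p q z
      rw [hDgt, hDgt, hDgt, hgtapp] at h1
      have h2 := hKg x p q z
      have h3 : (2 : ℝ) * ((l x ^ 2)⁻¹ * g x (Lgt x p q) z)
          = (l x ^ 2)⁻¹ * (2 * g x (Lg x p q) z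
              - 2 * τ x p * g x q z - 2 * τ x q * g x p z + 2 * τ x z * g x p q) := by
        linear_combination h1 - (l x ^ 2)⁻¹ * h2
      have h4 := mul_left_cancel₀ (inv_ne_zero (hl2 x))
        (by linarith [h3] : (l x ^ 2)⁻¹ * (2 * g x (Lgt x p q) z)
          = (l x ^ 2)⁻¹ * (2 * g x (Lg x p q) z
              - 2 * τ x p * g x q z - 2 * τ x q * g x p z + 2 * τ x z * g x p q))
      linarith [h4]
    refine sub_eq_zero.mp (ndg x _ fun z => ?_)
    rw [map_sub, LinearMap.sub_apply]
    rw [hpair z]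
    have : g x (Lg x p q - τ x p • q - τ x q • p + g x p q • T x) z
        = g x (Lg x p q) z - τ x p * g x q z - τ x q * g x p z + g x p q * g x (T x) z := by
      simp [map_sub, map_add, map_smul, LinearMap.sub_apply, LinearMap.add_apply,
        LinearMap.smul_apply, smul_eq_mul]
    rw [this, hgT]
    ring
  -- projection lemmas
  have hPadd : ∀ x a b, projF g v x (a + b) = projF g v x a + projF g v x b := by
    intro x a b
    simp [projF, map_add, LinearMap.add_apply, add_smul, Finset.sum_add_distrib]
  have hPsmul : ∀ x (c : ℝ) a, projF g v x (c • a) = c • projF g v x a := by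
    intro x c a
    simp [projF, map_smul, LinearMap.smul_apply, smul_smul, Finset.smul_sum]
  have hPsub : ∀ x a b, projF g v x (a - b) = projF g v x a - projF g v x b := by
    intro x a b
    simp [projF, map_sub, LinearMap.sub_apply, sub_smul, Finset.sum_sub_distrib]
  have hPv : ∀ x i, projF g v x (v i x) = v i x := by
    intro x i
    simp [projF, hv, ite_smul]
  have hPw : ∀ x j, projF g v x (w j x) = 0 := by
    intro x j
    simp only [projF]
    refine Finset.sum_eq_zero fun i _ => ?_
    rw [hgs x (w j x) (v i x), hvw]
    simp
  have hgPv : ∀ x z i, g x (projF g v x z) (v i x) = g x z (v i x) := by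
    intro x z i
    simp only [projF, map_sum, LinearMap.sum_apply, map_smul, LinearMap.smul_apply,
      smul_eq_mul, hv]
    simp [mul_ite]
  have hgPw : ∀ x z j, g x (projF g v x z) (w j x) = 0 := by
    intro x z j
    simp only [projF, map_sum, LinearMap.sum_apply, map_smul, LinearMap.smul_apply,
      smul_eq_mul, hvw]
    simp
  have hPP : ∀ x z, projF g v x (projF g v x z) = projF g v x z := by
    intro x z
    show ∑ i, g x (projF g v x z) (v i x) • v i x = ∑ i, g x z (v i x) • v i x
    exact Finset.sum_congr rfl fun i _ => by rw [hgPv]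
  have hPsum : ∀ x {ι : Type} (s : Finset ι) (f : ι → Pt (r + n)),
      projF g v x (∑ k ∈ s, f k) = ∑ k ∈ s, projF g v x (f k) := by
    intro x ι s f
    show ∑ i, g x (∑ k ∈ s, f k) (v i x) • v i x = _
    have hc : ∀ i, g x (∑ k ∈ s, f k) (v i x) = ∑ k ∈ s, g x (f k) (v i x) := by
      intro i; rw [map_sum]; simp [LinearMap.sum_apply]
    simp only [hc, Finset.sum_smul]
    rw [Finset.sum_comm]
    exact Finset.sum_congr rfl fun k _ => rfl
  have hgsum : ∀ x {ι : Type} (s : Finset ι) (f : ι → Pt (r + n)) (z : Pt (r + n)),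
      g x (∑ k ∈ s, f k) z = ∑ k ∈ s, g x (f k) z := by
    intro x ι s f z
    rw [map_sum]
    simp [LinearMap.sum_apply]
  have ndgF : ∀ x (y : Pt (r + n)), (∀ i, g x y (v i x) = 0) → (∀ j, g x y (w j x) = 0)
      → y = 0 := by
    intro x y h1 h2
    conv_lhs => rw [hspan x y]
    simp [h1, h2]
  -- conformal change of the frame second fundamental data
  have hvtc : ∀ i x, covVF Lgt (vt i) (vt i) x
      = (l x ^ 2) • (covVF Lg (v i) (v i) x + T x - τ x (v i x) • v i x) := by
    intro i x
    have hvfun : vt i = fun p => l p • v i p := funext fun p => hvt i p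
    have hd : fderiv ℝ (vt i) x = l x • fderiv ℝ (v i) x
        + (fderiv ℝ l x).smulRight (v i x) := by
      rw [hvfun]
      exact fderiv_smul (hld x) (((hvs i).differentiable (by simp)) x)
    have hB : Lgt x (vt i x) (vt i x) = (l x * l x) • Lgt x (v i x) (v i x) := by
      rw [hvt i x]
      simp [map_smul, LinearMap.smul_apply, smul_smul]
    show fderiv ℝ (vt i) x (vt i x) + Lgt x (vt i x) (vt i x) = _
    rw [hd, hB, hLgtEq x (v i x) (v i x), hv x i i, if_pos rfl, hvt i x]
    simp only [ContinuousLinearMap.add_apply, ContinuousLinearMap.smul_apply,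
      ContinuousLinearMap.smulRight_apply, map_smul, smul_eq_mul]
    have hsc : fderiv ℝ l x (v i x) = l x * τ x (v i x) := by
      rw [hτ]; field_simp [hln x]
    rw [hsc]
    simp only [covVF]
    module
  have hwtc : ∀ j x, covVF Lgt (wt j) (wt j) x
      = (l x ^ 2) • (covVF Lg (w j) (w j) x + T x - τ x (w j x) • w j x) := by
    intro j x
    have hwfun : wt j = fun p => l p • w j p := funext fun p => hwt j p
    have hd : fderiv ℝ (wt j) x = l x • fderiv ℝ (w j) x
        + (fderiv ℝ l x).smulRight (w j x) := by
      rw [hwfun]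
      exact fderiv_smul (hld x) (((hws j).differentiable (by simp)) x)
    have hB : Lgt x (wt j x) (wt j x) = (l x * l x) • Lgt x (w j x) (w j x) := by
      rw [hwt j x]
      simp [map_smul, LinearMap.smul_apply, smul_smul]
    show fderiv ℝ (wt j) x (wt j x) + Lgt x (wt j x) (wt j x) = _
    rw [hd, hB, hLgtEq x (w j x) (w j x), hw x j j, if_pos rfl, hwt j x]
    simp only [ContinuousLinearMap.add_apply, ContinuousLinearMap.smul_apply,
      ContinuousLinearMap.smulRight_apply, map_smul, smul_eq_mul]
    have hsc : fderiv ℝ l x (w j x) = l x * τ x (w j x) := by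
      rw [hτ]; field_simp [hln x]
    rw [hsc]
    simp only [covVF]
    module
  have hPt : ∀ x z, projF gt vt x z = projF g v x z := by
    intro x z
    show ∑ i, gt x z (vt i x) • vt i x = ∑ i, g x z (v i x) • v i x
    refine Finset.sum_congr rfl fun i _ => ?_
    rw [hvt i x, hgtapp, map_smul, smul_eq_mul, smul_smul]
    congr 1
    field_simp [hln x]
  -- Part 1 : conformal transformation of the Lee form
  have part1 : ∀ x u, αgt x u = αg x u + (l x)⁻¹ * fderiv ℝ l x u := by
    intro x u
    rw [hαgt x u, hαg x u]
    have hsum1 : ∀ i : Fin r,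
        covVF Lgt (vt i) (vt i) x - projF gt vt x (covVF Lgt (vt i) (vt i) x)
        = (l x ^ 2) • ((covVF Lg (v i) (v i) x - projF g v x (covVF Lg (v i) (v i) x))
            + (T x - projF g v x (T x))) := by
      intro i
      rw [hPt, hvtc, hPsmul]
      have hP1 : projF g v x (covVF Lg (v i) (v i) x + T x - τ x (v i x) • v i x)
          = projF g v x (covVF Lg (v i) (v i) x) + projF g v x (T x)
            - τ x (v i x) • v i x := by
        rw [hPsub, hPadd, hPsmul, hPv]
      rw [hP1]
      module
    have hsum2 : ∀ j : Fin n,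
        projF gt vt x (covVF Lgt (wt j) (wt j) x)
        = (l x ^ 2) • (projF g v x (covVF Lg (w j) (w j) x) + projF g v x (T x)) := by
      intro j
      rw [hPt, hwtc, hPsmul]
      have hP1 : projF g v x (covVF Lg (w j) (w j) x + T x - τ x (w j x) • w j x)
          = projF g v x (covVF Lg (w j) (w j) x) + projF g v x (T x) := by
        rw [hPsub, hPadd, hPsmul, hPw]
        simp
      rw [hP1]
    have h1 : gt x (∑ i, (covVF Lgt (vt i) (vt i) x
          - projF gt vt x (covVF Lgt (vt i) (vt i) x))) u
        = g x (∑ i, (covVF Lg (v i) (v i) x - projF g v x (covVF Lg (v i) (v i) x))) u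
          + (r : ℝ) * g x (T x - projF g v x (T x)) u := by
      simp only [hsum1]
      rw [← Finset.smul_sum, hgtapp, map_smul, LinearMap.smul_apply, smul_eq_mul]
      rw [Finset.sum_add_distrib, Finset.sum_const, Finset.card_univ, Fintype.card_fin]
      rw [map_add, LinearMap.add_apply, hgsum]
      have : g x ((r : ℕ) • (T x - projF g v x (T x))) u
          = (r : ℝ) * g x (T x - projF g v x (T x)) u := by
        rw [← Nat.cast_smul_eq_nsmul ℝ, map_smul, LinearMap.smul_apply, smul_eq_mul]
      rw [this]
      field_simp [hln x]
    have h2 : gt x (∑ j, projF gt vt x (covVF Lgt (wt j) (wt j) x)) u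
        = g x (∑ j, projF g v x (covVF Lg (w j) (w j) x)) u
          + (n : ℝ) * g x (projF g v x (T x)) u := by
      simp only [hsum2]
      rw [← Finset.smul_sum, hgtapp, map_smul, LinearMap.smul_apply, smul_eq_mul]
      rw [Finset.sum_add_distrib, Finset.sum_const, Finset.card_univ, Fintype.card_fin]
      rw [map_add, LinearMap.add_apply, hgsum]
      have : g x ((n : ℕ) • projF g v x (T x)) u
          = (n : ℝ) * g x (projF g v x (T x)) u := by
        rw [← Nat.cast_smul_eq_nsmul ℝ, map_smul, LinearMap.smul_apply, smul_eq_mul]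
      rw [this]
      field_simp [hln x]
    rw [h1, h2]
    have hTT : g x (T x - projF g v x (T x)) u + g x (projF g v x (T x)) u
        = (l x)⁻¹ * fderiv ℝ l x u := by
      rw [map_sub, LinearMap.sub_apply, sub_add_cancel]
      have := hgT x u
      rw [hτ] at this
      exact this
    have hms : g x (T x - projF g v x (T x)) u
        = g x (T x) u - g x (projF g v x (T x)) u := by
      rw [map_sub, LinearMap.sub_apply]
    field_simp [hrne, hnne]
    linear_combination ((r : ℝ) * (n : ℝ)) * hTT
  -- mean curvature vectors and the Lee vector field
  set μV : Pt (r + n) → Pt (r + n) :=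
    fun x => ∑ i, (covVF Lg (v i) (v i) x - projF g v x (covVF Lg (v i) (v i) x)) with hμV
  set μH : Pt (r + n) → Pt (r + n) :=
    fun x => ∑ j, projF g v x (covVF Lg (w j) (w j) x) with hμH
  set a : Pt (r + n) → Pt (r + n) :=
    fun x => (r : ℝ)⁻¹ • μV x + (n : ℝ)⁻¹ • μH x with ha
  have hαg' : ∀ x z, αg x z = g x (a x) z := by
    intro x z
    rw [hαg x z]
    simp only [ha, hμV, hμH]
    simp [map_add, map_smul, LinearMap.add_apply, LinearMap.smul_apply, smul_eq_mul]
  have hPμV : ∀ x, projF g v x (μV x) = 0 := by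
    intro x
    simp only [hμV]
    rw [hPsum]
    refine Finset.sum_eq_zero fun i _ => ?_
    rw [hPsub, hPP, sub_self]
  have hPμH : ∀ x, projF g v x (μH x) = μH x := by
    intro x
    simp only [hμH]
    rw [hPsum]
    exact Finset.sum_congr rfl fun j _ => hPP x _
  have hPa : ∀ x, projF g v x (a x) = (n : ℝ)⁻¹ • μH x := by
    intro x
    simp only [ha]
    rw [hPadd, hPsmul, hPsmul, hPμV, hPμH, smul_zero, zero_add]
  -- the candidate Weyl connection
  set Γd : Conn (r + n) := fun x => LinearMap.mk₂ ℝ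
      (fun p q => Lg x p q + g x (a x) p • q + g x (a x) q • p - g x p q • a x)
      (by
        intro p p' q
        simp only [map_add, LinearMap.add_apply]
        module)
      (by
        intro c p q
        simp only [map_smul, LinearMap.smul_apply, smul_eq_mul]
        module)
      (by
        intro p q q'
        simp only [map_add, LinearMap.add_apply]
        module)
      (by
        intro c p q
        simp only [map_smul, LinearMap.smul_apply, smul_eq_mul]
        module)
    with hΓd
  have hΓdapp : ∀ x p q, Γd x p q
      = Lg x p q + g x (a x) p • q + g x (a x) q • p - g x p q • a x := by
    intro x p q
    simp only [hΓd, LinearMap.mk₂_apply]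
  have htfd : TorsionFree Γd := by
    intro x p q
    rw [hΓdapp, hΓdapp, hLg.1 x p q, hgs x p q]
    module
  have hWeyl : ∀ x u' v' w', covMet g Γd x u' v' w' = -2 * αg x u' * g x v' w' := by
    intro x u' v' w'
    have hF := hLg.2 x u' v' w'
    simp only [covMet] at hF ⊢
    rw [hΓdapp, hΓdapp]
    have e1 : g x (Lg x u' v' + g x (a x) u' • v' + g x (a x) v' • u' - g x u' v' • a x) w'
        = g x (Lg x u' v') w' + g x (a x) u' * g x v' w' + g x (a x) v' * g x u' w'
          - g x u' v' * g x (a x) w' := by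
      simp [map_add, map_sub, map_smul, LinearMap.add_apply, LinearMap.sub_apply,
        LinearMap.smul_apply, smul_eq_mul]
    have e2 : g x v' (Lg x u' w' + g x (a x) u' • w' + g x (a x) w' • u' - g x u' w' • a x)
        = g x v' (Lg x u' w') + g x (a x) u' * g x v' w' + g x (a x) w' * g x v' u'
          - g x u' w' * g x v' (a x) := by
      simp [map_add, map_sub, map_smul, smul_eq_mul]
    rw [e1, e2, hαg' x u']
    have e3 : g x v' (a x) = g x (a x) v' := hgs x v' (a x)
    have e4 : g x v' u' = g x u' v' := hgs x v' u'
    linear_combination hF - g x (a x) w' * e4 + g x u' w' * e3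
  -- minimality of V for Γd
  have hcovdv : ∀ x i, covVF Γd (v i) (v i) x
      = covVF Lg (v i) (v i) x + (2 * g x (a x) (v i x)) • v i x - a x := by
    intro x i
    show fderiv ℝ (v i) x (v i x) + Γd x (v i x) (v i x) = _
    rw [hΓdapp, hv x i i, if_pos rfl]
    simp only [covVF]
    module
  have hcovdw : ∀ x j, covVF Γd (w j) (w j) x
      = covVF Lg (w j) (w j) x + (2 * g x (a x) (w j x)) • w j x - a x := by
    intro x j
    show fderiv ℝ (w j) x (w j x) + Γd x (w j x) (w j x) = _
    rw [hΓdapp, hw x j j, if_pos rfl]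
    simp only [covVF]
    module
  have minV : ∀ x, (∑ i, (covVF Γd (v i) (v i) x
      - projF g v x (covVF Γd (v i) (v i) x))) = 0 := by
    intro x
    have hsub : ∀ i : Fin r, covVF Γd (v i) (v i) x - projF g v x (covVF Γd (v i) (v i) x)
        = (covVF Lg (v i) (v i) x - projF g v x (covVF Lg (v i) (v i) x))
          - (a x - projF g v x (a x)) := by
      intro i
      rw [hcovdv]
      rw [hPsub, hPadd, hPsmul, hPv]
      module
    simp only [hsub]
    rw [Finset.sum_sub_distrib, Finset.sum_const, Finset.card_univ, Fintype.card_fin]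
    have haP : a x - projF g v x (a x) = (r : ℝ)⁻¹ • μV x := by
      rw [hPa]
      simp only [ha]
      module
    rw [haP, ← Nat.cast_smul_eq_nsmul ℝ, smul_smul, mul_inv_cancel₀ hrne, one_smul]
    simp only [hμV]
    simp
  have minH : ∀ x, (∑ j, projF g v x (covVF Γd (w j) (w j) x)) = 0 := by
    intro x
    have hsub : ∀ j : Fin n, projF g v x (covVF Γd (w j) (w j) x)
        = projF g v x (covVF Lg (w j) (w j) x) - (n : ℝ)⁻¹ • μH x := by
      intro j
      rw [hcovdw]
      rw [hPsub, hPadd, hPsmul, hPw, hPa]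
      module
    simp only [hsub]
    rw [Finset.sum_sub_distrib, Finset.sum_const, Finset.card_univ, Fintype.card_fin]
    rw [← Nat.cast_smul_eq_nsmul ℝ, smul_smul, mul_inv_cancel₀ hnne, one_smul]
    simp only [hμH]
    simp
  refine ⟨part1, Γd, ⟨htfd, hWeyl⟩, minV, minH, ?_⟩
  -- uniqueness
  intro Γ' α' hW' hmV' hmH'
  have hK' := koszul g hgs Γ' α' hW'.1 hW'.2
  have hKd := koszul g hgs Γd αg htfd hWeyl
  funext x
  have hΔ : ∀ p q z, g x (Γ' x p q) z - g x (Γd x p q) z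
      = (α' x p - αg x p) * g x q z + (α' x q - αg x q) * g x p z
        - (α' x z - αg x z) * g x p q := by
    intro p q z
    linear_combination (hK' x p q z - hKd x p q z) / 2
  have hΔ' : ∀ p q z, g x (Γ' x p q - Γd x p q) z
      = (α' x p - αg x p) * g x q z + (α' x q - αg x q) * g x p z
        - (α' x z - αg x z) * g x p q := by
    intro p q z
    rw [map_sub, LinearMap.sub_apply]
    exact hΔ p q z
  -- minimality difference, V part
  have hsplitV : ∀ i : Fin r, (covVF Γ' (v i) (v i) x - projF g v x (covVF Γ' (v i) (v i) x))
      - (covVF Γd (v i) (v i) x - projF g v x (covVF Γd (v i) (v i) x))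
      = (Γ' x (v i x) (v i x) - Γd x (v i x) (v i x))
        - projF g v x (Γ' x (v i x) (v i x) - Γd x (v i x) (v i x)) := by
    intro i
    simp only [covVF]
    rw [hPsub, hPadd, hPadd]
    module
  have hmdV : ∑ i, ((Γ' x (v i x) (v i x) - Γd x (v i x) (v i x))
      - projF g v x (Γ' x (v i x) (v i x) - Γd x (v i x) (v i x))) = 0 := by
    have hc : ∑ i, ((Γ' x (v i x) (v i x) - Γd x (v i x) (v i x))
        - projF g v x (Γ' x (v i x) (v i x) - Γd x (v i x) (v i x)))
        = (∑ i, (covVF Γ' (v i) (v i) x - projF g v x (covVF Γ' (v i) (v i) x)))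
          - ∑ i, (covVF Γd (v i) (v i) x - projF g v x (covVF Γd (v i) (v i) x)) := by
      rw [← Finset.sum_sub_distrib]
      exact Finset.sum_congr rfl fun i _ => (hsplitV i).symm
    rw [hc, hmV' x, minV x, sub_self]
  have hmdH : ∑ j, projF g v x (Γ' x (w j x) (w j x) - Γd x (w j x) (w j x)) = 0 := by
    have hsplitH : ∀ j : Fin n, projF g v x (covVF Γ' (w j) (w j) x)
        - projF g v x (covVF Γd (w j) (w j) x)
        = projF g v x (Γ' x (w j x) (w j x) - Γd x (w j x) (w j x)) := by
      intro j
      simp only [covVF]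
      rw [hPsub, hPadd, hPadd]
      module
    have hc : ∑ j, projF g v x (Γ' x (w j x) (w j x) - Γd x (w j x) (w j x))
        = (∑ j, projF g v x (covVF Γ' (w j) (w j) x))
          - ∑ j, projF g v x (covVF Γd (w j) (w j) x) := by
      rw [← Finset.sum_sub_distrib]
      exact Finset.sum_congr rfl fun j _ => (hsplitH j).symm
    rw [hc, hmH' x, minH x, sub_self]
  -- β vanishes on the frame
  have hβw : ∀ k, α' x (w k x) - αg x (w k x) = 0 := by
    intro k
    have h0 := congrArg (fun y => g x y (w k x)) hmdV
    simp only [map_zero, LinearMap.zero_apply] at h0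
    rw [hgsum] at h0
    have hterm : ∀ i : Fin r, i ∈ Finset.univ →
        g x ((Γ' x (v i x) (v i x) - Γd x (v i x) (v i x))
          - projF g v x (Γ' x (v i x) (v i x) - Γd x (v i x) (v i x))) (w k x)
        = -(α' x (w k x) - αg x (w k x)) := by
      intro i _
      rw [map_sub, LinearMap.sub_apply, hgPw, sub_zero]
      rw [hΔ' (v i x) (v i x) (w k x)]
      rw [hvw x i k, hv x i i, if_pos rfl]
      ring
    rw [Finset.sum_congr rfl hterm, Finset.sum_const, Finset.card_univ,
      Fintype.card_fin, nsmul_eq_mul] at h0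
    have := mul_eq_zero.mp h0
    rcases this with h | h
    · exact absurd h hrne
    · linarith [h]
  have hβv : ∀ k, α' x (v k x) - αg x (v k x) = 0 := by
    intro k
    have h0 := congrArg (fun y => g x y (v k x)) hmdH
    simp only [map_zero, LinearMap.zero_apply] at h0
    rw [hgsum] at h0
    have hterm : ∀ j : Fin n, j ∈ Finset.univ →
        g x (projF g v x (Γ' x (w j x) (w j x) - Γd x (w j x) (w j x))) (v k x)
        = -(α' x (v k x) - αg x (v k x)) := by
      intro j _
      rw [hgPv]
      rw [hΔ' (w j x) (w j x) (v k x)]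
      rw [hgs x (w j x) (v k x), hvw x k j, hw x j j, if_pos rfl]
      ring
    rw [Finset.sum_congr rfl hterm, Finset.sum_const, Finset.card_univ,
      Fintype.card_fin, nsmul_eq_mul] at h0
    have := mul_eq_zero.mp h0
    rcases this with h | h
    · exact absurd h hnne
    · linarith [h]
  -- β vanishes everywhere
  have hβ0 : ∀ z, α' x z - αg x z = 0 := by
    intro z
    have hD0 : Γ' x (v ⟨0, hr0⟩ x) (v ⟨0, hr0⟩ x) - Γd x (v ⟨0, hr0⟩ x) (v ⟨0, hr0⟩ x) = 0 := by
      refine ndgF x _ (fun i => ?_) (fun j => ?_)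
      · rw [hΔ' (v ⟨0, hr0⟩ x) (v ⟨0, hr0⟩ x) (v i x)]
        rw [hβv ⟨0, hr0⟩, hβv i]
        ring
      · rw [hΔ' (v ⟨0, hr0⟩ x) (v ⟨0, hr0⟩ x) (w j x)]
        rw [hβv ⟨0, hr0⟩, hβw j]
        ring
    have := hΔ' (v ⟨0, hr0⟩ x) (v ⟨0, hr0⟩ x) z
    rw [hD0, map_zero, hβv ⟨0, hr0⟩, hv x ⟨0, hr0⟩ ⟨0, hr0⟩, if_pos rfl] at this
    simp only [LinearMap.zero_apply] at this
    linarith [this]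
  refine LinearMap.ext fun p => LinearMap.ext fun q => ?_
  have h0 : Γ' x p q - Γd x p q = 0 := by
    refine ndg x _ fun z => ?_
    rw [hΔ' p q z, hβ0 p, hβ0 q, hβ0 z]
    ring
  exact sub_eq_zero.mp h0
end
end

section
/- Let (M, c, J) be an almost Hermitian conformal manifold of dimension m = 2n ≥ 4 with Kähler form ω. For a Weyl connection D on (M,c), the condition d^D ω ∧ ω^{n−2} = 0 is equivalent to tr_c(DJ) = 0; moreover, for any Weyl connection D and any orthonormal-type conformal frame {X_1, JX_1, …, X_n, JX_n} with associated metric g, one has Σ_{i=1}^n (d^D ω)(X_i, JX_i, JY) = −c(tr_g(DJ), Y) for all tangent vectors Y. -/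
noncomputable section
open scoped BigOperators

/-- The Kähler form `ω(u,v) = g(Ju, v)`. -/
def kf {m : ℕ} (g : Met m) (J : Pt m → Pt m →ₗ[ℝ] Pt m) (x u v : Pt m) : ℝ :=
  g x (J x u) v

/-- The covariant derivative `(D_u ω)(v,w)` of the `L²`-valued Kähler form, for a Weyl
connection with Lee form `α` (the term `2 α(u) ω(v,w)` is the `L²`-contribution). -/
def covKf {m : ℕ} (g : Met m) (Γ : Conn m) (α : Pt m → Pt m → ℝ)
    (J : Pt m → Pt m →ₗ[ℝ] Pt m) (x u v w : Pt m) : ℝ :=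
  fderiv ℝ (fun p => kf g J p v w) x u - kf g J x (Γ x u v) w - kf g J x v (Γ x u w)
    + 2 * α x u * kf g J x v w

/-- The exterior covariant derivative `(d^D ω)(a,b,c)` of the Kähler form. -/
def dDKf {m : ℕ} (g : Met m) (Γ : Conn m) (α : Pt m → Pt m → ℝ)
    (J : Pt m → Pt m →ₗ[ℝ] Pt m) (x a b c : Pt m) : ℝ :=
  covKf g Γ α J x a b c + covKf g Γ α J x b c a + covKf g Γ α J x c a b

/-- The trace `tr_g(DJ)` over the adapted frame `{Xᵢ, JXᵢ}`. -/
def trDJ {m nn : ℕ} (Γ : Conn m) (J : Pt m → Pt m →ₗ[ℝ] Pt m)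
    (X : Fin nn → Pt m → Pt m) (x : Pt m) : Pt m :=
  ∑ i, (DJof Γ J x (X i x) (X i x) + DJof Γ J x (J x (X i x)) (J x (X i x)))

section AuxLemmas

lemma pt_decomp {m : ℕ} (v : Pt m) :
    v = ∑ k, v k • EuclideanSpace.single k (1 : ℝ) := by
  ext j
  rw [WithLp.ofLp_sum, Finset.sum_apply]
  simp [EuclideanSpace.single_apply]

/-- Leibniz rule for `p ↦ A p (V p)` with `A` a family of linear maps. -/
lemma keyChain {m : ℕ} {E : Type*} [NormedAddCommGroup E] [NormedSpace ℝ E]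
    (A : Pt m → Pt m →ₗ[ℝ] E) (V : Pt m → Pt m) (x u : Pt m)
    (hA : ∀ v, DifferentiableAt ℝ (fun p => A p v) x)
    (hV : DifferentiableAt ℝ V x) :
    fderiv ℝ (fun p => A p (V p)) x u
      = fderiv ℝ (fun p => A p (V x)) x u + A x (fderiv ℝ V x u) := by
  classical
  set e : Fin m → Pt m := fun k => EuclideanSpace.single k (1 : ℝ) with he
  have hrep : ∀ (p : Pt m) (v : Pt m), A p v = ∑ k, v k • A p (e k) := by
    intro p v
    conv_lhs => rw [pt_decomp v]
    rw [map_sum]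
    simp [he]
  have hcoord : ∀ k : Fin m, DifferentiableAt ℝ (fun p => V p k) x := by
    intro k
    exact ((EuclideanSpace.proj k : Pt m →L[ℝ] ℝ).differentiableAt).comp x hV
  have hterm : ∀ k : Fin m, DifferentiableAt ℝ (fun p => V p k • A p (e k)) x :=
    fun k => (hcoord k).smul (hA (e k))
  have hc : ∀ k, fderiv ℝ (fun p => V p k) x u = (fderiv ℝ V x u) k := by
    intro k
    have h : fderiv ℝ (fun p => V p k) x
        = (EuclideanSpace.proj (𝕜 := ℝ) k).comp (fderiv ℝ V x) :=
      ((EuclideanSpace.proj (𝕜 := ℝ) k).hasFDerivAt.comp x hV.hasFDerivAt).fderiv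
    rw [h]
    rfl
  have h1 : (fun p => A p (V p)) = fun p => ∑ k, V p k • A p (e k) := by
    funext p; exact hrep p (V p)
  have h2 : fderiv ℝ (fun p => A p (V x)) x u
      = ∑ k, V x k • fderiv ℝ (fun p => A p (e k)) x u := by
    have h2' : (fun p => A p (V x)) = fun p => ∑ k, V x k • A p (e k) := by
      funext p; exact hrep p (V x)
    rw [h2', fderiv_fun_sum (A := fun k p => V x k • A p (e k)) (fun k _ => (hA (e k)).const_smul (V x k))]
    rw [ContinuousLinearMap.sum_apply]
    refine Finset.sum_congr rfl fun k _ => ?_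
    rw [fderiv_fun_const_smul (hA (e k)) (V x k)]
    simp
  have h3 : A x (fderiv ℝ V x u) = ∑ k, (fderiv ℝ V x u) k • A x (e k) :=
    hrep x _
  rw [h1, fderiv_fun_sum (fun k _ => hterm k), ContinuousLinearMap.sum_apply, h2, h3]
  rw [← Finset.sum_add_distrib]
  refine Finset.sum_congr rfl fun k _ => ?_
  rw [fderiv_fun_smul (hcoord k) (hA (e k))]
  simp only [ContinuousLinearMap.add_apply, ContinuousLinearMap.smul_apply,
    ContinuousLinearMap.smulRight_apply, hc k]

variable {m : ℕ} {g : Met m} {Γ : Conn m} {α : Pt m → Pt m → ℝ}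
  {J : Pt m → Pt m →ₗ[ℝ] Pt m}

/-- `(Dω)(v,w) = c((DJ)v, w)`. -/
lemma covKf_eq_DJ
    (hgsm : ∀ v w : Pt m, ContDiff ℝ (⊤ : ℕ∞) fun x => g x v w)
    (hJs : ∀ v : Pt m, ContDiff ℝ (⊤ : ℕ∞) fun x => J x v)
    (hW : IsWeyl g Γ α) (x u v w : Pt m) :
    covKf g Γ α J x u v w = g x (DJof Γ J x u v) w := by
  have hA : ∀ a : Pt m, DifferentiableAt ℝ (fun p => (g p).flip w a) x := by
    intro a
    have : (fun p => (g p).flip w a) = fun p => g p a w := by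
      funext p; simp [LinearMap.flip_apply]
    rw [this]
    exact ((hgsm a w).differentiable (by simp)).differentiableAt
  have hV : DifferentiableAt ℝ (fun p => J p v) x :=
    ((hJs v).differentiable (by simp)).differentiableAt
  have hkey := keyChain (fun p => (g p).flip w) (fun p => J p v) x u hA hV
  have hfun : (fun p => (g p).flip w (J p v)) = fun p => kf g J p v w := by
    funext p; simp [kf, LinearMap.flip_apply]
  have hfun2 : (fun p => (g p).flip w (J x v)) = fun p => g p (J x v) w := by
    funext p; simp [LinearMap.flip_apply]
  rw [hfun, hfun2] at hkey
  have hmet := hW.2 x u (J x v) w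
  unfold covMet at hmet
  have hd : fderiv ℝ (fun p => g p (J x v) w) x u
      = -2 * α x u * g x (J x v) w + g x (Γ x u (J x v)) w
        + g x (J x v) (Γ x u w) := by linarith
  simp only [kf] at hkey
  simp only [covKf, kf, DJof]
  rw [hkey, hd]
  simp only [map_add, map_sub, LinearMap.add_apply, LinearMap.sub_apply,
    LinearMap.flip_apply]
  ring

/-- `(D_u J)(Jv) = -J((D_u J)v)`. -/
lemma DJ_anticomm
    (hJ2 : ∀ (x : Pt m) u, J x (J x u) = -u)
    (hJs : ∀ v : Pt m, ContDiff ℝ (⊤ : ℕ∞) fun x => J x v)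
    (x u v : Pt m) :
    DJof Γ J x u (J x v) = - J x (DJof Γ J x u v) := by
  have hA : ∀ a : Pt m, DifferentiableAt ℝ (fun p => J p a) x := fun a =>
    ((hJs a).differentiable (by simp)).differentiableAt
  have hV : DifferentiableAt ℝ (fun p => J p v) x := hA v
  have hkey := keyChain J (fun p => J p v) x u hA hV
  have hconst : (fun p => J p (J p v)) = fun _ => -v := by
    funext p; exact hJ2 p v
  rw [hconst] at hkey
  simp only [fderiv_fun_const, Pi.zero_apply, ContinuousLinearMap.zero_apply] at hkey
  have hd : fderiv ℝ (fun p => J p (J x v)) x u = - J x (fderiv ℝ (fun p => J p v) x u) := by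
    linear_combination (norm := module) hkey.symm
  simp only [DJof, hd, hJ2, map_neg, map_add, map_sub]
  abel

/-- Pointwise skewness of `ω`. -/
lemma kf_antisymm (hgs : MetSymm g)
    (hJ2 : ∀ (x : Pt m) u, J x (J x u) = -u)
    (hJg : ∀ (x : Pt m) u v, g x (J x u) (J x v) = g x u v)
    (p v w : Pt m) : kf g J p v w = - kf g J p w v := by
  unfold kf
  rw [hgs p (J p v) w, ← hJg p w (J p v), hJ2 p v, map_neg]

/-- `c(Ja, b) = -c(a, Jb)`. -/
lemma gJ_skew (hJ2 : ∀ (x : Pt m) u, J x (J x u) = -u)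
    (hJg : ∀ (x : Pt m) u v, g x (J x u) (J x v) = g x u v)
    (x a b : Pt m) : g x (J x a) b = - g x a (J x b) := by
  rw [← hJg x (J x a) b, hJ2 x a]
  simp

/-- `(Dω)` is skew in its last two arguments. -/
lemma covKf_antisymm (hgs : MetSymm g)
    (hJ2 : ∀ (x : Pt m) u, J x (J x u) = -u)
    (hJg : ∀ (x : Pt m) u v, g x (J x u) (J x v) = g x u v)
    (x u v w : Pt m) :
    covKf g Γ α J x u v w = - covKf g Γ α J x u w v := by
  have hk : ∀ a b : Pt m, kf g J x a b = - kf g J x b a :=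
    fun a b => kf_antisymm hgs hJ2 hJg x a b
  have hf : (fun p => kf g J p v w) = fun p => -kf g J p w v := by
    funext p; exact kf_antisymm hgs hJ2 hJg p v w
  unfold covKf
  rw [hf, fderiv_fun_neg]
  simp only [ContinuousLinearMap.neg_apply]
  rw [hk (Γ x u v) w, hk v (Γ x u w), hk v w]
  ring

/-- `(D_u J)` is skew w.r.t. `g`. -/
lemma DJ_skew
    (hgs : MetSymm g)
    (hgsm : ∀ v w : Pt m, ContDiff ℝ (⊤ : ℕ∞) fun x => g x v w)
    (hJ2 : ∀ (x : Pt m) u, J x (J x u) = -u)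
    (hJg : ∀ (x : Pt m) u v, g x (J x u) (J x v) = g x u v)
    (hJs : ∀ v : Pt m, ContDiff ℝ (⊤ : ℕ∞) fun x => J x v)
    (hW : IsWeyl g Γ α) (x u v w : Pt m) :
    g x (DJof Γ J x u v) w = - g x v (DJof Γ J x u w) := by
  rw [← covKf_eq_DJ hgsm hJs hW, covKf_antisymm hgs hJ2 hJg,
    covKf_eq_DJ hgsm hJs hW, hgs x (DJof Γ J x u w) v]

end AuxLemmas

/-- For an almost Hermitian manifold of dimension `m = 2 nn ≥ 4` with Kähler form `ω`
and any Weyl connection `D`: `Σᵢ (d^D ω)(Xᵢ, JXᵢ, JY) = −c(tr_g(DJ), Y)` for any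
adapted conformal frame `{Xᵢ, JXᵢ}`; consequently the condition
`d^D ω ∧ ω^{nn−2} = 0` (equivalently `Σᵢ (d^D ω)(Xᵢ, JXᵢ, ·) = 0`) is equivalent to
`tr_c(DJ) = 0`. -/
theorem stmt12 (m nn : ℕ) (hm : m = 2 * nn) (hnn : 2 ≤ nn)
    (g : Met m) (hgs : MetSymm g) (hgp : MetPos g)
    (hgsm : ∀ v w : Pt m, ContDiff ℝ (⊤ : ℕ∞) fun x => g x v w)
    (J : Pt m → Pt m →ₗ[ℝ] Pt m)
    (hJ2 : ∀ x u, J x (J x u) = -u)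
    (hJg : ∀ x u v, g x (J x u) (J x v) = g x u v)
    (hJs : ∀ v : Pt m, ContDiff ℝ (⊤ : ℕ∞) fun x => J x v)
    (Γ : Conn m) (α : Pt m → Pt m → ℝ) (hW : IsWeyl g Γ α)
    (X : Fin nn → Pt m → Pt m)
    (hX : ∀ x i j, g x (X i x) (X j x) = if i = j then (1 : ℝ) else 0)
    (hXJ : ∀ x i j, g x (X i x) (J x (X j x)) = 0)
    (hXspan : ∀ x u, u = (∑ i, g x u (X i x) • X i x)
      + ∑ i, g x u (J x (X i x)) • J x (X i x)) :
    (∀ x u, (∑ i, dDKf g Γ α J x (X i x) (J x (X i x)) (J x u))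
        = - g x (trDJ Γ J X x) u) ∧
    ((∀ x u, (∑ i, dDKf g Γ α J x (X i x) (J x (X i x)) u) = 0)
      ↔ ∀ x, trDJ Γ J X x = 0) := by
  have hT : ∀ x u v, DJof Γ J x u (J x v) = - J x (DJof Γ J x u v) :=
    DJ_anticomm (Γ := Γ) hJ2 hJs
  have hskew := DJ_skew hgs hgsm hJ2 hJg hJs hW
  have hEq := covKf_eq_DJ hgsm hJs hW
  have hterm3 : ∀ x a v, g x (DJof Γ J x a v) (J x v) = 0 := by
    intro x a v
    have h1 : g x (DJof Γ J x a v) (J x v) = - g x v (DJof Γ J x a (J x v)) :=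
      hskew x a v (J x v)
    rw [hT x a v, map_neg, neg_neg, hgs x v (J x (DJof Γ J x a v)),
      gJ_skew hJ2 hJg x (DJof Γ J x a v) v] at h1
    linarith
  have part1 : ∀ x u, (∑ i, dDKf g Γ α J x (X i x) (J x (X i x)) (J x u))
      = - g x (trDJ Γ J X x) u := by
    intro x u
    have hsummand : ∀ i, dDKf g Γ α J x (X i x) (J x (X i x)) (J x u)
        = - (g x (DJof Γ J x (X i x) (X i x)
             + DJof Γ J x (J x (X i x)) (J x (X i x))) u) := by
      intro i
      unfold dDKf
      rw [hEq x (X i x) (J x (X i x)) (J x u),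
          hEq x (J x (X i x)) (J x u) (X i x),
          hEq x (J x u) (X i x) (J x (X i x))]
      rw [hterm3 x (J x u) (X i x)]
      have t1 : g x (DJof Γ J x (X i x) (J x (X i x))) (J x u)
          = - g x (DJof Γ J x (X i x) (X i x)) u := by
        rw [hT x (X i x) (X i x), map_neg, LinearMap.neg_apply,
          hJg x (DJof Γ J x (X i x) (X i x)) u]
      have t2 : g x (DJof Γ J x (J x (X i x)) (J x u)) (X i x)
          = - g x (DJof Γ J x (J x (X i x)) (J x (X i x))) u := by
        rw [hT x (J x (X i x)) u, map_neg, LinearMap.neg_apply,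
          gJ_skew hJ2 hJg x (DJof Γ J x (J x (X i x)) u) (X i x), neg_neg,
          hskew x (J x (X i x)) u (J x (X i x)),
          hgs x u (DJof Γ J x (J x (X i x)) (J x (X i x)))]
      rw [t1, t2]
      simp only [map_add, LinearMap.add_apply]
      ring
    calc (∑ i, dDKf g Γ α J x (X i x) (J x (X i x)) (J x u))
        = ∑ i, - (g x (DJof Γ J x (X i x) (X i x)
            + DJof Γ J x (J x (X i x)) (J x (X i x))) u) :=
          Finset.sum_congr rfl fun i _ => hsummand i
      _ = - g x (trDJ Γ J X x) u := by
          unfold trDJ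
          rw [map_sum, LinearMap.sum_apply, ← Finset.sum_neg_distrib]
  refine ⟨part1, ?_, ?_⟩
  · intro H x
    by_contra hne
    have h0 : ∀ u, g x (trDJ Γ J X x) u = 0 := by
      intro u
      have hp := part1 x u
      rw [H x (J x u)] at hp
      linarith
    have hpos := hgp x (trDJ Γ J X x) hne
    rw [h0 (trDJ Γ J X x)] at hpos
    exact lt_irrefl 0 hpos
  · intro H x u
    have hu : u = J x (- J x u) := by rw [map_neg, hJ2]; simp
    calc (∑ i, dDKf g Γ α J x (X i x) (J x (X i x)) u)
        = ∑ i, dDKf g Γ α J x (X i x) (J x (X i x)) (J x (-J x u)) := by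
          conv_lhs => rw [hu]
      _ = - g x (trDJ Γ J X x) (-J x u) := part1 x _
      _ = 0 := by rw [H x]; simp
end
end

section
/- There exists a unique Weyl connection D on an almost Hermitian conformal manifold (M,c,J) of dimension m ≥ 4 such that tr_c(DJ) = 0; its Lee form with respect to any local representative g of c equals −1/(m−2) times the Lee form of J with respect to g. -/
noncomputable section
open scoped BigOperators

/-- The exterior derivative `dω(a,b,c)` of the Kähler form (constant arguments). -/
def dKf {m : ℕ} (g : Met m) (J : Pt m → Pt m →ₗ[ℝ] Pt m) (x a b c : Pt m) : ℝ :=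
  fderiv ℝ (fun p => kf g J p b c) x a - fderiv ℝ (fun p => kf g J p a c) x b
    + fderiv ℝ (fun p => kf g J p a b) x c

/-- The Lee form of `J` with respect to `g`, in the adapted frame `{Xᵢ, JXᵢ}`. -/
def leeJ {m nn : ℕ} (g : Met m) (J : Pt m → Pt m →ₗ[ℝ] Pt m)
    (X : Fin nn → Pt m → Pt m) (x u : Pt m) : ℝ :=
  ∑ i, dKf g J x (X i x) (J x (X i x)) u

def dgf {m : ℕ} (g : Met m) (x u v w : Pt m) : ℝ := fderiv ℝ (fun p => g p v w) x u
def sgl {m : ℕ} (k : Fin m) : Pt m := EuclideanSpace.single k (1:ℝ)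
def Djf {m : ℕ} (J : Pt m → Pt m →ₗ[ℝ] Pt m) (x a b : Pt m) : Pt m :=
  fderiv ℝ (fun p => J p b) x a

lemma expand {m : ℕ} (u : Pt m) : ∑ k, u k • sgl k = u := by
  ext j
  have : (∑ k, u k • sgl k) j = ∑ k, u k * (sgl k j) := by
    simp [PiLp.smul_apply]
  rw [this]; simp [sgl, EuclideanSpace.single_apply]

lemma g_expand {m : ℕ} (g : Met m) (x u c : Pt m) :
    g x u c = ∑ k, u k * g x (sgl k) c := by
  conv_lhs => rw [← expand u]
  rw [map_sum]; simp [Finset.sum_apply]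

lemma J_expand {m : ℕ} (J : Pt m → Pt m →ₗ[ℝ] Pt m) (p u : Pt m) :
    J p u = ∑ k, u k • J p (sgl k) := by
  conv_lhs => rw [← expand u]
  rw [map_sum]
  exact Finset.sum_congr rfl fun k _ => by rw [map_smul]

section A
variable {m : ℕ}

lemma diffg {g : Met m} (hgsm : ∀ v w : Pt m, ContDiff ℝ (⊤ : ℕ∞) fun x => g x v w)
    (v w : Pt m) : Differentiable ℝ (fun p => g p v w) :=
  (hgsm v w).differentiable (by simp)

lemma dg_sym {g : Met m} (hgs : MetSymm g) (x u v w : Pt m) :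
    dgf g x u v w = dgf g x u w v := by
  unfold dgf
  have h : (fun p => g p v w) = fun p => g p w v := funext fun p => hgs p v w
  rw [h]

lemma dg_expand {g : Met m} (hgsm : ∀ v w : Pt m, ContDiff ℝ (⊤ : ℕ∞) fun x => g x v w)
    (x a u c : Pt m) :
    dgf g x a u c = ∑ k, u k * dgf g x a (sgl k) c := by
  unfold dgf
  have h1 : (fun p => g p u c) = fun p => ∑ k, u k * g p (sgl k) c := by
    ext p; exact g_expand g p u c
  rw [h1, fderiv_fun_sum (fun k _ => ((diffg hgsm (sgl k) c).differentiableAt).const_mul _)]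
  rw [ContinuousLinearMap.sum_apply]
  refine Finset.sum_congr rfl fun k _ => ?_
  rw [fderiv_const_mul ((diffg hgsm (sgl k) c).differentiableAt)]
  simp

lemma Dj_expand {J : Pt m → Pt m →ₗ[ℝ] Pt m} (hJs : ∀ v : Pt m, ContDiff ℝ (⊤ : ℕ∞) fun x => J x v)
    (x a u : Pt m) :
    Djf J x a u = ∑ k, u k • Djf J x a (sgl k) := by
  unfold Djf
  have h1 : (fun p => J p u) = fun p => ∑ k, u k • J p (sgl k) := by
    funext p; exact J_expand J p u
  rw [h1, fderiv_fun_sum (A := fun k p => u k • J p (sgl k)) (fun k _ => (((hJs (sgl k)).differentiable (by simp)).differentiableAt).const_smul (u k))]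
  rw [ContinuousLinearMap.sum_apply]
  refine Finset.sum_congr rfl fun k _ => ?_
  rw [fderiv_fun_const_smul (((hJs (sgl k)).differentiable (by simp)).differentiableAt)]
  simp

lemma coord_diff {F : Pt m → Pt m} (hF : Differentiable ℝ F) (k : Fin m) :
    Differentiable ℝ (fun p => F p k) :=
  (EuclideanSpace.proj (𝕜 := ℝ) k).differentiable.comp hF

lemma coord_fderiv {F : Pt m → Pt m} (hF : Differentiable ℝ F) (k : Fin m) (x a : Pt m) :
    fderiv ℝ (fun p => F p k) x a = (fderiv ℝ F x a) k := by
  have h : HasFDerivAt (fun p => F p k)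
      (((EuclideanSpace.proj k : Pt m →L[ℝ] ℝ)).comp (fderiv ℝ F x)) x :=
    ((EuclideanSpace.proj k : Pt m →L[ℝ] ℝ).hasFDerivAt).comp x (hF x).hasFDerivAt
  rw [h.fderiv]; rfl

lemma omega_diff {g : Met m} (hgsm : ∀ v w : Pt m, ContDiff ℝ (⊤ : ℕ∞) fun x => g x v w)
    (F : Pt m → Pt m) (hF : Differentiable ℝ F) (c : Pt m) :
    Differentiable ℝ (fun p => g p (F p) c) := by
  have h1 : (fun p => g p (F p) c) = fun p => ∑ k, (F p) k * g p (sgl k) c := by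
    ext p; exact g_expand g p (F p) c
  rw [h1]
  exact Differentiable.fun_sum fun k _ => (coord_diff hF k).mul (diffg hgsm (sgl k) c)

lemma prod_scalar {g : Met m} (hgsm : ∀ v w : Pt m, ContDiff ℝ (⊤ : ℕ∞) fun x => g x v w)
    (F : Pt m → Pt m) (hF : Differentiable ℝ F) (c x a : Pt m) :
    fderiv ℝ (fun p => g p (F p) c) x a
      = dgf g x a (F x) c + g x (fderiv ℝ F x a) c := by
  have h1 : (fun p => g p (F p) c) = fun p => ∑ k, (F p) k * g p (sgl k) c := by
    ext p; exact g_expand g p (F p) c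
  rw [h1, fderiv_fun_sum (A := fun k p => F p k * g p (sgl k) c) (fun k _ => ((coord_diff hF k x).mul ((diffg hgsm (sgl k) c) x)))]
  rw [ContinuousLinearMap.sum_apply]
  have h2 : ∀ k : Fin m, (fderiv ℝ (fun p => F p k * g p (sgl k) c) x) a
      = (fderiv ℝ F x a) k * g x (sgl k) c + F x k * dgf g x a (sgl k) c := by
    intro k
    rw [fderiv_fun_mul (coord_diff hF k x) ((diffg hgsm (sgl k) c) x)]
    simp only [ContinuousLinearMap.add_apply, ContinuousLinearMap.smul_apply, smul_eq_mul]
    rw [coord_fderiv hF k x a]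
    unfold dgf; ring
  rw [Finset.sum_congr rfl (fun k _ => h2 k), Finset.sum_add_distrib]
  rw [← g_expand, ← dg_expand hgsm]
  ring

lemma prod_vec {J : Pt m → Pt m →ₗ[ℝ] Pt m} (hJs : ∀ v : Pt m, ContDiff ℝ (⊤ : ℕ∞) fun x => J x v)
    (F : Pt m → Pt m) (hF : Differentiable ℝ F) (x a : Pt m) :
    fderiv ℝ (fun p => J p (F p)) x a
      = Djf J x a (F x) + J x (fderiv ℝ F x a) := by
  have h1 : (fun p => J p (F p)) = fun p => ∑ k, (F p) k • J p (sgl k) := by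
    funext p; exact J_expand J p (F p)
  rw [h1, fderiv_fun_sum (A := fun k p => F p k • J p (sgl k)) (fun k _ => DifferentiableAt.smul (coord_diff hF k x)
    (((hJs (sgl k)).differentiable (by simp)) x))]
  rw [ContinuousLinearMap.sum_apply]
  have h2 : ∀ k : Fin m, (fderiv ℝ (fun p => F p k • J p (sgl k)) x) a
      = F x k • Djf J x a (sgl k) + (fderiv ℝ F x a) k • J x (sgl k) := by
    intro k
    rw [fderiv_fun_smul (coord_diff hF k x) (((hJs (sgl k)).differentiable (by simp)) x)]
    simp only [ContinuousLinearMap.add_apply, ContinuousLinearMap.smul_apply,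
      ContinuousLinearMap.smulRight_apply]
    rw [coord_fderiv hF k x a]
    unfold Djf; abel
  rw [Finset.sum_congr rfl (fun k _ => h2 k), Finset.sum_add_distrib]
  rw [← Dj_expand hJs, ← J_expand]

end A
def Kf {m : ℕ} (g : Met m) (x u v w : Pt m) : ℝ :=
  (dgf g x u v w + dgf g x v u w - dgf g x w u v) / 2

def Pf {m : ℕ} (g : Met m) (J : Pt m → Pt m →ₗ[ℝ] Pt m) (x a b c : Pt m) : ℝ :=
  g x (Djf J x a b) c + Kf g x a (J x b) c + Kf g x a b (J x c)

section B
variable {m : ℕ} {g : Met m} {J : Pt m → Pt m →ₗ[ℝ] Pt m}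

lemma K_metric (hgs : MetSymm g) (x a u w : Pt m) :
    Kf g x a u w + Kf g x a w u = dgf g x a u w := by
  unfold Kf
  have h := dg_sym hgs x a u w
  ring_nf
  linarith [dg_sym hgs x a u w]

lemma K_symuv (hgs : MetSymm g) (x u v w : Pt m) :
    Kf g x u v w = Kf g x v u w := by
  unfold Kf
  linarith [dg_sym hgs x w u v]

lemma dg_w_neg (x u v w : Pt m) : dgf g x u v (-w) = -dgf g x u v w := by
  unfold dgf
  have h : (fun p => g p v (-w)) = fun p => -(g p v w) := funext fun p => by
    rw [map_neg]
  rw [h, fderiv_fun_neg]; simp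

lemma dg_v_neg (x u v w : Pt m) : dgf g x u (-v) w = -dgf g x u v w := by
  unfold dgf
  have h : (fun p => g p (-v) w) = fun p => -(g p v w) := funext fun p => by
    rw [map_neg]; rfl
  rw [h, fderiv_fun_neg]; simp

lemma dg_u_neg (x u v w : Pt m) : dgf g x (-u) v w = -dgf g x u v w := by
  unfold dgf; rw [map_neg]

lemma K_neg3 (x u v w : Pt m) : Kf g x u v (-w) = -Kf g x u v w := by
  unfold Kf
  rw [dg_w_neg, dg_w_neg, dg_u_neg]; ring

lemma K_neg2 (x u v w : Pt m) : Kf g x u (-v) w = -Kf g x u v w := by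
  unfold Kf
  rw [dg_v_neg, dg_u_neg, dg_w_neg]; ring

lemma Jskew (hgs : MetSymm g) (hJ2 : ∀ x u, J x (J x u) = -u)
    (hJg : ∀ x u v, g x (J x u) (J x v) = g x u v) (x a b : Pt m) :
    g x (J x a) b = -g x a (J x b) := by
  have h1 : J x (-(J x b)) = b := by rw [map_neg, hJ2]; simp
  calc g x (J x a) b = g x (J x a) (J x (-(J x b))) := by rw [h1]
    _ = g x a (-(J x b)) := hJg x a _
    _ = -g x a (J x b) := by rw [map_neg]

lemma keyD (hgsm : ∀ v w : Pt m, ContDiff ℝ (⊤ : ℕ∞) fun x => g x v w)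
    (hJs : ∀ v : Pt m, ContDiff ℝ (⊤ : ℕ∞) fun x => J x v) (x a b c : Pt m) :
    fderiv ℝ (fun p => g p (J p b) c) x a
      = dgf g x a (J x b) c + g x (Djf J x a b) c := by
  exact prod_scalar hgsm (fun p => J p b) ((hJs b).differentiable (by simp)) c x a

lemma Dj_J (hJ2 : ∀ x u, J x (J x u) = -u)
    (hJs : ∀ v : Pt m, ContDiff ℝ (⊤ : ℕ∞) fun x => J x v) (x a b : Pt m) :
    Djf J x a (J x b) = -(J x (Djf J x a b)) := by
  have hconst : (fun p => J p (J p b)) = fun _ => (-b : Pt m) := funext fun p => hJ2 p b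
  have h := prod_vec hJs (fun p => J p b) ((hJs b).differentiable (by simp)) x a
  rw [hconst] at h
  simp only [fderiv_fun_const] at h
  have h0 : (0 : Pt m) = Djf J x a (J x b) + J x (Djf J x a b) := by
    simpa [Djf] using h
  have := h0.symm
  linear_combination (norm := module) this

lemma P1 (hgs : MetSymm g) (hgsm : ∀ v w : Pt m, ContDiff ℝ (⊤ : ℕ∞) fun x => g x v w)
    (hJ2 : ∀ x u, J x (J x u) = -u)
    (hJg : ∀ x u v, g x (J x u) (J x v) = g x u v)
    (hJs : ∀ v : Pt m, ContDiff ℝ (⊤ : ℕ∞) fun x => J x v) (x a b c : Pt m) :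
    Pf g J x a b c + Pf g J x a c b = 0 := by
  have hskew : (fun p => g p (J p b) c) = fun p => -(g p (J p c) b) := funext fun p => by
    rw [Jskew hgs hJ2 hJg p b c, hgs p b (J p c)]
  have hd : fderiv ℝ (fun p => g p (J p b) c) x a
      = -(fderiv ℝ (fun p => g p (J p c) b) x a) := by
    rw [hskew, fderiv_fun_neg]; simp
  rw [keyD hgsm hJs, keyD hgsm hJs] at hd
  unfold Pf
  have m1 := K_metric hgs x a (J x b) c
  have m2 := K_metric (g := g) hgs x a b (J x c)
  have hs : dgf g x a (J x c) b = dgf g x a b (J x c) := dg_sym hgs x a (J x c) b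
  linarith [K_symuv hgs x a (J x b) c]
end B
section C
variable {m : ℕ} {g : Met m} {J : Pt m → Pt m →ₗ[ℝ] Pt m}

lemma P_neg3 (x a b c : Pt m) : Pf g J x a b (-c) = -Pf g J x a b c := by
  unfold Pf
  rw [map_neg, K_neg3, map_neg, K_neg3]
  ring

lemma P2 (hgs : MetSymm g) (hgsm : ∀ v w : Pt m, ContDiff ℝ (⊤ : ℕ∞) fun x => g x v w)
    (hJ2 : ∀ x u, J x (J x u) = -u)
    (hJg : ∀ x u v, g x (J x u) (J x v) = g x u v)
    (hJs : ∀ v : Pt m, ContDiff ℝ (⊤ : ℕ∞) fun x => J x v) (x a b c : Pt m) :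
    Pf g J x a (J x b) c = Pf g J x a b (J x c) := by
  unfold Pf
  rw [hJ2, K_neg2, hJ2, K_neg3]
  have h1 : g x (Djf J x a (J x b)) c = g x (Djf J x a b) (J x c) := by
    rw [Dj_J hJ2 hJs, map_neg]
    simp only [LinearMap.neg_apply]
    rw [Jskew hgs hJ2 hJg x (Djf J x a b) c]
    ring
  rw [h1]; ring

lemma P3 (hgs : MetSymm g) (hgsm : ∀ v w : Pt m, ContDiff ℝ (⊤ : ℕ∞) fun x => g x v w)
    (hJs : ∀ v : Pt m, ContDiff ℝ (⊤ : ℕ∞) fun x => J x v) (x a b c : Pt m) :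
    dKf g J x a b c = Pf g J x a b c - Pf g J x b a c + Pf g J x c a b := by
  have e1 : dKf g J x a b c
      = (dgf g x a (J x b) c + g x (Djf J x a b) c)
      - (dgf g x b (J x a) c + g x (Djf J x b a) c)
      + (dgf g x c (J x a) b + g x (Djf J x c a) b) := by
    unfold dKf kf
    rw [keyD hgsm hJs x a b c, keyD hgsm hJs x b a c, keyD hgsm hJs x c a b]
  rw [e1]
  unfold Pf Kf
  have s1 := dg_sym (g := g) hgs x a (J x b) c
  have s2 := dg_sym (g := g) hgs x a b (J x c)
  have s3 := dg_sym (g := g) hgs x b (J x a) c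
  have s4 := dg_sym (g := g) hgs x b a (J x c)
  have s5 := dg_sym (g := g) hgs x c (J x a) b
  have s6 := dg_sym (g := g) hgs x c a (J x b)
  have s7 := dg_sym (g := g) hgs x (J x b) a c
  have s8 := dg_sym (g := g) hgs x (J x c) a b
  have s9 := dg_sym (g := g) hgs x (J x a) b c
  linarith

lemma LC (hgs : MetSymm g) (hgsm : ∀ v w : Pt m, ContDiff ℝ (⊤ : ℕ∞) fun x => g x v w)
    (hJ2 : ∀ x u, J x (J x u) = -u)
    (hJg : ∀ x u v, g x (J x u) (J x v) = g x u v)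
    (hJs : ∀ v : Pt m, ContDiff ℝ (⊤ : ℕ∞) fun x => J x v) (x a c : Pt m) :
    Pf g J x a a c + Pf g J x (J x a) (J x a) c + dKf g J x a (J x a) (J x c) = 0 := by
  have e1 : Pf g J x a (J x a) (J x c) = -Pf g J x a a c := by
    rw [P2 hgs hgsm hJ2 hJg hJs x a a (J x c), hJ2, P_neg3]
  have e2 : Pf g J x (J x a) a (J x c) = Pf g J x (J x a) (J x a) c :=
    (P2 hgs hgsm hJ2 hJg hJs x (J x a) a c).symm
  have e3 : Pf g J x (J x c) a (J x a) = 0 := by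
    have h1 := P1 hgs hgsm hJ2 hJg hJs x (J x c) a (J x a)
    have h2 := P2 hgs hgsm hJ2 hJg hJs x (J x c) a a
    linarith
  rw [P3 hgs hgsm hJs x a (J x a) (J x c), e1, e2, e3]
  ring
end C
section D
variable {m : ℕ} {g : Met m} {J : Pt m → Pt m →ₗ[ℝ] Pt m}

lemma kf_diff (hgsm : ∀ v w : Pt m, ContDiff ℝ (⊤ : ℕ∞) fun x => g x v w)
    (hJs : ∀ v : Pt m, ContDiff ℝ (⊤ : ℕ∞) fun x => J x v) (b c : Pt m) :
    Differentiable ℝ (fun p => kf g J p b c) :=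
  omega_diff hgsm (fun p => J p b) ((hJs b).differentiable (by simp)) c

lemma dKf_add3 (hgsm : ∀ v w : Pt m, ContDiff ℝ (⊤ : ℕ∞) fun x => g x v w)
    (hJs : ∀ v : Pt m, ContDiff ℝ (⊤ : ℕ∞) fun x => J x v) (x a b u u' : Pt m) :
    dKf g J x a b (u + u') = dKf g J x a b u + dKf g J x a b u' := by
  unfold dKf
  have h1 : ∀ d : Pt m, (fun p => kf g J p d (u + u')) =
      fun p => kf g J p d u + kf g J p d u' := fun d => funext fun p => by
    unfold kf; rw [map_add]
  rw [h1 a, h1 b, fderiv_fun_add ((kf_diff hgsm hJs a u) x) ((kf_diff hgsm hJs a u') x),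
    fderiv_fun_add ((kf_diff hgsm hJs b u) x) ((kf_diff hgsm hJs b u') x), map_add]
  simp only [ContinuousLinearMap.add_apply]
  ring

lemma dKf_smul3 (hgsm : ∀ v w : Pt m, ContDiff ℝ (⊤ : ℕ∞) fun x => g x v w)
    (hJs : ∀ v : Pt m, ContDiff ℝ (⊤ : ℕ∞) fun x => J x v) (x a b : Pt m) (t : ℝ) (u : Pt m) :
    dKf g J x a b (t • u) = t * dKf g J x a b u := by
  unfold dKf
  have h1 : ∀ d : Pt m, (fun p => kf g J p d (t • u)) =
      fun p => t * kf g J p d u := fun d => funext fun p => by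
    unfold kf; rw [map_smul]; simp
  rw [h1 a, h1 b, fderiv_const_mul ((kf_diff hgsm hJs a u) x),
    fderiv_const_mul ((kf_diff hgsm hJs b u) x), map_smul]
  simp only [ContinuousLinearMap.coe_smul', Pi.smul_apply, smul_eq_mul]
  ring

lemma lee_linear {nn : ℕ} {X : Fin nn → Pt m → Pt m}
    (hgsm : ∀ v w : Pt m, ContDiff ℝ (⊤ : ℕ∞) fun x => g x v w)
    (hJs : ∀ v : Pt m, ContDiff ℝ (⊤ : ℕ∞) fun x => J x v) (x : Pt m) :
    IsLinearMap ℝ (fun u => leeJ g J X x u) := by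
  constructor
  · intro u u'
    unfold leeJ
    rw [← Finset.sum_add_distrib]
    exact Finset.sum_congr rfl fun i _ => dKf_add3 hgsm hJs x _ _ u u'
  · intro t u
    unfold leeJ
    rw [Finset.smul_sum]
    exact Finset.sum_congr rfl fun i _ => by
      rw [dKf_smul3 hgsm hJs x _ _ t u]; simp

lemma dg_v_add (hgsm : ∀ v w : Pt m, ContDiff ℝ (⊤ : ℕ∞) fun x => g x v w)
    (x u v v' w : Pt m) : dgf g x u (v + v') w = dgf g x u v w + dgf g x u v' w := by
  unfold dgf
  have h : (fun p => g p (v + v') w) = fun p => g p v w + g p v' w := funext fun p => by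
    rw [map_add]; rfl
  rw [h, fderiv_fun_add ((diffg hgsm v w) x) ((diffg hgsm v' w) x)]; rfl

lemma dg_v_smul (hgsm : ∀ v w : Pt m, ContDiff ℝ (⊤ : ℕ∞) fun x => g x v w)
    (x u : Pt m) (t : ℝ) (v w : Pt m) : dgf g x u (t • v) w = t * dgf g x u v w := by
  unfold dgf
  have h : (fun p => g p (t • v) w) = fun p => t * g p v w := funext fun p => by
    rw [map_smul]; simp
  rw [h, fderiv_const_mul ((diffg hgsm v w) x)]; rfl

lemma dg_w_add (hgsm : ∀ v w : Pt m, ContDiff ℝ (⊤ : ℕ∞) fun x => g x v w)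
    (x u v w w' : Pt m) : dgf g x u v (w + w') = dgf g x u v w + dgf g x u v w' := by
  unfold dgf
  have h : (fun p => g p v (w + w')) = fun p => g p v w + g p v w' := funext fun p => by
    rw [map_add]
  rw [h, fderiv_fun_add ((diffg hgsm v w) x) ((diffg hgsm v w') x)]; rfl

lemma dg_w_smul (hgsm : ∀ v w : Pt m, ContDiff ℝ (⊤ : ℕ∞) fun x => g x v w)
    (x u v : Pt m) (t : ℝ) (w : Pt m) : dgf g x u v (t • w) = t * dgf g x u v w := by
  unfold dgf
  have h : (fun p => g p v (t • w)) = fun p => t * g p v w := funext fun p => by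
    rw [map_smul]; simp
  rw [h, fderiv_const_mul ((diffg hgsm v w) x)]; rfl

lemma dg_u_add (x u u' v w : Pt m) :
    dgf g x (u + u') v w = dgf g x u v w + dgf g x u' v w := by
  unfold dgf; rw [map_add]

lemma dg_u_smul (x : Pt m) (t : ℝ) (u v w : Pt m) :
    dgf g x (t • u) v w = t * dgf g x u v w := by
  unfold dgf; rw [map_smul]; rfl

lemma K_lin1 (hgsm : ∀ v w : Pt m, ContDiff ℝ (⊤ : ℕ∞) fun x => g x v w) (x v w : Pt m) :
    IsLinearMap ℝ (fun u => Kf g x u v w) := by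
  constructor
  · intro u u'; unfold Kf
    rw [dg_u_add, dg_v_add hgsm, dg_v_add hgsm]; ring
  · intro t u; unfold Kf
    rw [dg_u_smul, dg_v_smul hgsm, dg_v_smul hgsm]; simp; ring

lemma K_lin2 (hgsm : ∀ v w : Pt m, ContDiff ℝ (⊤ : ℕ∞) fun x => g x v w) (x u w : Pt m) :
    IsLinearMap ℝ (fun v => Kf g x u v w) := by
  constructor
  · intro v v'; unfold Kf
    rw [dg_v_add hgsm, dg_u_add, dg_w_add hgsm]; ring
  · intro t v; unfold Kf
    rw [dg_v_smul hgsm, dg_u_smul, dg_w_smul hgsm]; simp; ring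

lemma K_lin3 (hgsm : ∀ v w : Pt m, ContDiff ℝ (⊤ : ℕ∞) fun x => g x v w) (x u v : Pt m) :
    IsLinearMap ℝ (fun w => Kf g x u v w) := by
  constructor
  · intro w w'; unfold Kf
    rw [dg_w_add hgsm, dg_w_add hgsm, dg_u_add]; ring
  · intro t w; unfold Kf
    rw [dg_w_smul hgsm, dg_w_smul hgsm, dg_u_smul]; simp; ring

end D
def betaG {m : ℕ} (g : Met m) (lam : Pt m → Pt m → ℝ) (x u v w : Pt m) : ℝ :=
  Kf g x u v w + lam x u * g x v w + lam x v * g x u w - g x u v * lam x w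

def sharpB {m nn : ℕ} (J : Pt m → Pt m →ₗ[ℝ] Pt m) (X : Fin nn → Pt m → Pt m)
    (x : Pt m) (β : Pt m → ℝ) : Pt m :=
  (∑ i, β (X i x) • X i x) + ∑ i, β (J x (X i x)) • J x (X i x)

section E
variable {m nn : ℕ} {g : Met m} {J : Pt m → Pt m →ₗ[ℝ] Pt m} {X : Fin nn → Pt m → Pt m}
  {lam : Pt m → Pt m → ℝ}

lemma sharpB_add (x : Pt m) (β β₁ β₂ : Pt m → ℝ) (h : ∀ w, β w = β₁ w + β₂ w) :
    sharpB J X x β = sharpB J X x β₁ + sharpB J X x β₂ := by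
  simp only [sharpB, h, add_smul, Finset.sum_add_distrib]; abel

lemma sharpB_smul (x : Pt m) (β β₁ : Pt m → ℝ) (t : ℝ) (h : ∀ w, β w = t * β₁ w) :
    sharpB J X x β = t • sharpB J X x β₁ := by
  simp only [sharpB, h, mul_smul, ← Finset.smul_sum, smul_add]

lemma betaG_add1 (hgsm : ∀ v w : Pt m, ContDiff ℝ (⊤ : ℕ∞) fun x => g x v w)
    (hlam : ∀ x, IsLinearMap ℝ (lam x)) (x u u' v w : Pt m) :
    betaG g lam x (u + u') v w = betaG g lam x u v w + betaG g lam x u' v w := by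
  unfold betaG
  rw [(K_lin1 hgsm x v w).map_add, (hlam x).map_add, map_add]
  simp only [LinearMap.add_apply]; ring

lemma betaG_smul1 (hgsm : ∀ v w : Pt m, ContDiff ℝ (⊤ : ℕ∞) fun x => g x v w)
    (hlam : ∀ x, IsLinearMap ℝ (lam x)) (x : Pt m) (t : ℝ) (u v w : Pt m) :
    betaG g lam x (t • u) v w = t * betaG g lam x u v w := by
  unfold betaG
  rw [(K_lin1 hgsm x v w).map_smul, (hlam x).map_smul, map_smul]
  simp only [LinearMap.smul_apply, smul_eq_mul]; ring

lemma betaG_add2 (hgsm : ∀ v w : Pt m, ContDiff ℝ (⊤ : ℕ∞) fun x => g x v w)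
    (hlam : ∀ x, IsLinearMap ℝ (lam x)) (x u v v' w : Pt m) :
    betaG g lam x u (v + v') w = betaG g lam x u v w + betaG g lam x u v' w := by
  unfold betaG
  rw [(K_lin2 hgsm x u w).map_add, (hlam x).map_add, map_add (g x) v v',
    map_add (g x u) v v']
  simp only [LinearMap.add_apply]; ring

lemma betaG_smul2 (hgsm : ∀ v w : Pt m, ContDiff ℝ (⊤ : ℕ∞) fun x => g x v w)
    (hlam : ∀ x, IsLinearMap ℝ (lam x)) (x u : Pt m) (t : ℝ) (v w : Pt m) :
    betaG g lam x u (t • v) w = t * betaG g lam x u v w := by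
  unfold betaG
  rw [(K_lin2 hgsm x u w).map_smul, (hlam x).map_smul, map_smul (g x) t v,
    map_smul (g x u) t v]
  simp only [LinearMap.smul_apply, smul_eq_mul]; ring

lemma betaG_lin3 (hgsm : ∀ v w : Pt m, ContDiff ℝ (⊤ : ℕ∞) fun x => g x v w)
    (hlam : ∀ x, IsLinearMap ℝ (lam x)) (x u v : Pt m) :
    IsLinearMap ℝ (fun w => betaG g lam x u v w) := by
  constructor
  · intro w w'
    unfold betaG
    rw [(K_lin3 hgsm x u v).map_add, (hlam x).map_add, map_add, map_add]
    ring
  · intro t w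
    unfold betaG
    rw [(K_lin3 hgsm x u v).map_smul, (hlam x).map_smul, map_smul, map_smul]
    simp only [LinearMap.smul_apply, smul_eq_mul]; ring

def GammaW (g : Met m) (J : Pt m → Pt m →ₗ[ℝ] Pt m) (X : Fin nn → Pt m → Pt m)
    (lam : Pt m → Pt m → ℝ)
    (hgsm : ∀ v w : Pt m, ContDiff ℝ (⊤ : ℕ∞) fun x => g x v w)
    (hlam : ∀ x, IsLinearMap ℝ (lam x)) : Conn m := fun x =>
  LinearMap.mk₂ ℝ (fun u v => sharpB J X x (fun w => betaG g lam x u v w))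
    (fun u u' v => sharpB_add x _ _ _ (fun w => betaG_add1 hgsm hlam x u u' v w))
    (fun t u v => sharpB_smul x _ _ t (fun w => betaG_smul1 hgsm hlam x t u v w))
    (fun u v v' => sharpB_add x _ _ _ (fun w => betaG_add2 hgsm hlam x u v v' w))
    (fun t u v => sharpB_smul x _ _ t (fun w => betaG_smul2 hgsm hlam x u t v w))

lemma repro (hgs : MetSymm g)
    (hXspan : ∀ x u, u = (∑ i, g x u (X i x) • X i x)
      + ∑ i, g x u (J x (X i x)) • J x (X i x))
    (x : Pt m) (β : Pt m → ℝ) (hβ : IsLinearMap ℝ β) (w : Pt m) :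
    g x (sharpB J X x β) w = β w := by
  have h1 : g x (sharpB J X x β) w = (∑ i, β (X i x) * g x (X i x) w)
      + ∑ i, β (J x (X i x)) * g x (J x (X i x)) w := by
    unfold sharpB
    rw [map_add, map_sum, map_sum]
    simp [LinearMap.add_apply, LinearMap.sum_apply, map_smul, LinearMap.smul_apply,
      smul_eq_mul]
  have h2 : β w = (∑ i, g x w (X i x) * β (X i x))
      + ∑ i, g x w (J x (X i x)) * β (J x (X i x)) := by
    conv_lhs => rw [hXspan x w]
    rw [hβ.map_add]
    have hs : ∀ (r : Fin nn → Pt m), β (∑ i, g x w (r i) • r i)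
        = ∑ i, g x w (r i) * β (r i) := by
      intro r
      calc β (∑ i, g x w (r i) • r i)
          = (IsLinearMap.mk' β hβ) (∑ i, g x w (r i) • r i) := rfl
        _ = ∑ i, (IsLinearMap.mk' β hβ) (g x w (r i) • r i) := map_sum _ _ _
        _ = ∑ i, g x w (r i) * β (r i) := Finset.sum_congr rfl fun i _ => by
            rw [map_smul]; simp
    rw [hs (fun i => X i x), hs (fun i => J x (X i x))]
  rw [h1, h2]
  congr 1
  · exact Finset.sum_congr rfl fun i _ => by rw [hgs x w (X i x)]; ring
  · exact Finset.sum_congr rfl fun i _ => by rw [hgs x w (J x (X i x))]; ring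

lemma GammaW_repro (hgs : MetSymm g)
    (hgsm : ∀ v w : Pt m, ContDiff ℝ (⊤ : ℕ∞) fun x => g x v w)
    (hlam : ∀ x, IsLinearMap ℝ (lam x))
    (hXspan : ∀ x u, u = (∑ i, g x u (X i x) • X i x)
      + ∑ i, g x u (J x (X i x)) • J x (X i x))
    (x u v w : Pt m) :
    g x (GammaW g J X lam hgsm hlam x u v) w = betaG g lam x u v w :=
  repro hgs hXspan x _ (betaG_lin3 hgsm hlam x u v) w

lemma GammaW_tf (hgs : MetSymm g)
    (hgsm : ∀ v w : Pt m, ContDiff ℝ (⊤ : ℕ∞) fun x => g x v w)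
    (hlam : ∀ x, IsLinearMap ℝ (lam x)) :
    TorsionFree (GammaW g J X lam hgsm hlam) := by
  intro x u v
  have h : (fun w => betaG g lam x u v w) = fun w => betaG g lam x v u w :=
    funext fun w => by unfold betaG; rw [K_symuv hgs, hgs x u v]; ring
  show sharpB J X x (fun w => betaG g lam x u v w)
      = sharpB J X x (fun w => betaG g lam x v u w)
  rw [h]

lemma GammaW_weyl (hgs : MetSymm g)
    (hgsm : ∀ v w : Pt m, ContDiff ℝ (⊤ : ℕ∞) fun x => g x v w)
    (hlam : ∀ x, IsLinearMap ℝ (lam x))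
    (hXspan : ∀ x u, u = (∑ i, g x u (X i x) • X i x)
      + ∑ i, g x u (J x (X i x)) • J x (X i x)) :
    IsWeyl g (GammaW g J X lam hgsm hlam) lam := by
  refine ⟨GammaW_tf hgs hgsm hlam, fun x u v w => ?_⟩
  unfold covMet
  have e0 : fderiv ℝ (fun p => g p v w) x u = dgf g x u v w := rfl
  rw [e0, GammaW_repro hgs hgsm hlam hXspan x u v w,
    hgs x v (GammaW g J X lam hgsm hlam x u w),
    GammaW_repro hgs hgsm hlam hXspan x u w v]
  unfold betaG
  rw [hgs x w v]
  have hK := K_metric hgs x u v w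
  linarith
end E
section F
variable {m nn : ℕ} {g : Met m} {J : Pt m → Pt m →ₗ[ℝ] Pt m} {X : Fin nn → Pt m → Pt m}
  {lam : Pt m → Pt m → ℝ}

lemma core (hgs : MetSymm g)
    (hgsm : ∀ v w : Pt m, ContDiff ℝ (⊤ : ℕ∞) fun x => g x v w)
    (hJ2 : ∀ x u, J x (J x u) = -u)
    (hJg : ∀ x u v, g x (J x u) (J x v) = g x u v)
    (hJs : ∀ v : Pt m, ContDiff ℝ (⊤ : ℕ∞) fun x => J x v)
    (hX : ∀ x i j, g x (X i x) (X j x) = if i = j then (1 : ℝ) else 0)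
    (hXJ : ∀ x i j, g x (X i x) (J x (X j x)) = 0)
    (hXspan : ∀ x u, u = (∑ i, g x u (X i x) • X i x)
      + ∑ i, g x u (J x (X i x)) • J x (X i x))
    (Γ' : Conn m) (hlam : ∀ x, IsLinearMap ℝ (lam x))
    (hkos : ∀ x u v w, g x (Γ' x u v) w = betaG g lam x u v w)
    (x c : Pt m) :
    g x (trDJ Γ' J X x) c
      = -leeJ g J X x (J x c) - (2 * (nn : ℝ) - 2) * lam x (J x c) := by
  have JskewL : ∀ a b : Pt m, g x (J x a) b = -g x a (J x b) :=
    fun a b => Jskew hgs hJ2 hJg x a b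
  -- covariant derivative of J contracted against c
  have hgDJ : ∀ u : Pt m, g x (DJof Γ' J x u u) c
      = g x (Djf J x u u) c + betaG g lam x u (J x u) c + betaG g lam x u u (J x c) := by
    intro u
    unfold DJof
    simp only [map_add, map_sub, LinearMap.add_apply, LinearMap.sub_apply]
    rw [hkos x u (J x u) c]
    have h2 : g x (J x (Γ' x u u)) c = -g x (Γ' x u u) (J x c) := JskewL _ _
    rw [h2, hkos x u u (J x c)]
    unfold Djf
    ring
  -- per index computation
  have perI : ∀ i, g x (DJof Γ' J x (X i x) (X i x)) c
        + g x (DJof Γ' J x (J x (X i x)) (J x (X i x))) c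
      = -dKf g J x (X i x) (J x (X i x)) (J x c)
        + (2 * lam x (J x (X i x)) * g x (X i x) c
          - 2 * lam x (X i x) * g x (J x (X i x)) c)
        - 2 * lam x (J x c) := by
    intro i
    set e := X i x with he
    set f := J x e with hf
    have hLC := LC hgs hgsm hJ2 hJg hJs x e c
    unfold Pf at hLC
    rw [← hf] at hLC
    rw [hgDJ e, hgDJ f]
    unfold betaG
    -- normalize J x f = -e
    have hJf : J x f = -e := by rw [hf, hJ2]
    rw [hJf] at hLC ⊢
    -- special values
    have gee : g x e e = 1 := by rw [he, hX x i i]; simp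
    have gef : g x e f = 0 := by rw [he, hf, he]; exact hXJ x i i
    have gfe : g x f e = 0 := by rw [hgs]; exact gef
    have gff : g x f f = 1 := by rw [hf, hJg]; exact gee
    have gfne : g x f (-e) = 0 := by rw [map_neg, gfe]; ring
    have geJc : g x e (J x c) = -g x f c := by
      have h := JskewL e c
      rw [← hf] at h
      linarith
    have gfJc : g x f (J x c) = g x e c := by
      have h := JskewL f c
      rw [hJf] at h
      have h2 : g x (-e) c = -g x e c := by rw [map_neg]; simp
      linarith
    have lamne : lam x (-e) = -lam x e := (hlam x).map_neg e
    have gnec : g x (-e) c = -g x e c := by rw [map_neg]; simp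
    have Kneg : Kf g x f (-e) c = -Kf g x f e c := by
      have h := (K_lin2 hgsm x f c).map_smul (-1 : ℝ) e
      simpa using h
    rw [Kneg] at hLC
    rw [gee, gef, gff, gfne, geJc, gfJc, lamne, gnec, Kneg]
    linarith
  -- sum over the frame
  have hsum : g x (trDJ Γ' J X x) c
      = ∑ i, (g x (DJof Γ' J x (X i x) (X i x)) c
        + g x (DJof Γ' J x (J x (X i x)) (J x (X i x))) c) := by
    unfold trDJ
    rw [map_sum]
    simp [LinearMap.sum_apply, map_add, LinearMap.add_apply]
  rw [hsum, Finset.sum_congr rfl (fun i _ => perI i)]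
  rw [Finset.sum_sub_distrib, Finset.sum_add_distrib]
  have h1 : ∑ i : Fin nn, -dKf g J x (X i x) (J x (X i x)) (J x c)
      = -leeJ g J X x (J x c) := by
    unfold leeJ; rw [← Finset.sum_neg_distrib]
  have h2 : ∑ i : Fin nn, (2 * lam x (J x (X i x)) * g x (X i x) c
        - 2 * lam x (X i x) * g x (J x (X i x)) c)
      = 2 * lam x (J x c) := by
    have hlamJc : lam x (J x c) = ∑ i, (lam x (J x (X i x)) * g x (X i x) c
        - lam x (X i x) * g x (J x (X i x)) c) := by
      conv_lhs => rw [hXspan x (J x c)]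
      rw [(hlam x).map_add]
      have hs : ∀ (r : Fin nn → Pt m), lam x (∑ i, g x (J x c) (r i) • r i)
          = ∑ i, g x (J x c) (r i) * lam x (r i) := by
        intro r
        calc lam x (∑ i, g x (J x c) (r i) • r i)
            = (IsLinearMap.mk' (lam x) (hlam x)) (∑ i, g x (J x c) (r i) • r i) := rfl
          _ = ∑ i, (IsLinearMap.mk' (lam x) (hlam x)) (g x (J x c) (r i) • r i) :=
              map_sum _ _ _
          _ = ∑ i, g x (J x c) (r i) * lam x (r i) := Finset.sum_congr rfl fun i _ => by
              rw [map_smul]; simp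
      rw [hs (fun i => X i x), hs (fun i => J x (X i x))]
      rw [← Finset.sum_add_distrib]
      refine Finset.sum_congr rfl fun i _ => ?_
      have e1 : g x (J x c) (X i x) = -g x (J x (X i x)) c := by
        rw [hgs x (J x c) (X i x)]
        have h := Jskew hgs hJ2 hJg x (X i x) c
        linarith
      have e2 : g x (J x c) (J x (X i x)) = g x (X i x) c := by
        rw [hJg x c (X i x)]
        exact hgs x c (X i x)
      rw [e1, e2]; ring
    rw [hlamJc, Finset.mul_sum]
    refine Finset.sum_congr rfl fun i _ => by ring
  have h3 : ∑ i : Fin nn, 2 * lam x (J x c) = 2 * (nn : ℝ) * lam x (J x c) := by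
    rw [Finset.sum_const]
    simp [Finset.card_univ]
    ring
  rw [h1, h2, h3]
  ring
end F
section G
variable {m nn : ℕ} {g : Met m} {J : Pt m → Pt m →ₗ[ℝ] Pt m} {X : Fin nn → Pt m → Pt m}

lemma nondeg (hgp : MetPos g) (x : Pt m) (t : Pt m) (h : ∀ w, g x t w = 0) : t = 0 := by
  by_contra hne
  exact absurd (h t) (ne_of_gt (hgp x t hne))

lemma weyl_lin (hgs : MetSymm g)
    (hX : ∀ x i j, g x (X i x) (X j x) = if i = j then (1 : ℝ) else 0)
    (i0 : Fin nn)
    (Γ' : Conn m) (α' : Pt m → Pt m → ℝ) (hW : IsWeyl g Γ' α') (x : Pt m) :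
    IsLinearMap ℝ (α' x) := by
  set v := X i0 x with hv
  have gvv : g x v v = 1 := by rw [hv, hX x i0 i0]; simp
  have hrep : ∀ u, α' x u = -(covMet g Γ' x u v v) / 2 := by
    intro u
    have h := hW.2 x u v v
    rw [gvv] at h
    rw [h]; ring
  have hcovadd : ∀ u u', covMet g Γ' x (u + u') v v
      = covMet g Γ' x u v v + covMet g Γ' x u' v v := by
    intro u u'
    unfold covMet
    simp only [map_add, LinearMap.add_apply, ContinuousLinearMap.add_apply]
    ring
  have hcovsmul : ∀ (t : ℝ) u, covMet g Γ' x (t • u) v v = t * covMet g Γ' x u v v := by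
    intro t u
    unfold covMet
    simp only [map_smul, LinearMap.smul_apply, ContinuousLinearMap.map_smul, smul_eq_mul]
    ring
  constructor
  · intro u u'; rw [hrep, hrep, hrep, hcovadd]; ring
  · intro t u; rw [hrep, hrep, hcovsmul, smul_eq_mul]; ring

lemma weyl_koszul (hgs : MetSymm g)
    (Γ' : Conn m) (α' : Pt m → Pt m → ℝ) (hW : IsWeyl g Γ' α') (x u v w : Pt m) :
    g x (Γ' x u v) w = betaG g α' x u v w := by
  have hF : ∀ a b c : Pt m, g x (Γ' x a b) c + g x (Γ' x a c) b
      = dgf g x a b c + 2 * α' x a * g x b c := by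
    intro a b c
    have h := hW.2 x a b c
    unfold covMet at h
    have e0 : fderiv ℝ (fun p => g p b c) x a = dgf g x a b c := rfl
    rw [e0] at h
    rw [hgs x b (Γ' x a c)] at h
    linarith
  have h1 := hF u v w
  have h2 := hF v w u
  have h3 := hF w u v
  have htf1 : Γ' x u v = Γ' x v u := hW.1 x u v
  have htf2 : Γ' x u w = Γ' x w u := hW.1 x u w
  have htf3 : Γ' x v w = Γ' x w v := hW.1 x v w
  rw [htf2] at h1
  rw [htf3] at h2
  rw [← htf1] at h2
  have hs1' : dgf g x v w u = dgf g x v u w := dg_sym hgs x v w u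
  have hs2' : g x w u = g x u w := hgs x w u
  rw [hs1', hs2'] at h2
  unfold betaG Kf
  have hs1 : dgf g x v w u = dgf g x v u w := dg_sym hgs x v w u
  have hs2 : g x w u = g x u w := hgs x w u
  have hs3 : g x v w = g x w v := hgs x v w
  have hs4 : g x (Γ' x w v) u = g x (Γ' x v w) u := by rw [htf3]
  linarith [hgs x u v]
end G
/-- On an almost Hermitian conformal manifold of dimension `m = 2 nn ≥ 4` there is a
unique Weyl connection `D` with `tr_c(DJ) = 0`; its Lee form w.r.t. any representative
`g` is `−1/(m−2)` times the Lee form of `J` w.r.t. `g`. -/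
theorem stmt13 (m nn : ℕ) (hm : m = 2 * nn) (hnn : 2 ≤ nn)
    (g : Met m) (hgs : MetSymm g) (hgp : MetPos g)
    (hgsm : ∀ v w : Pt m, ContDiff ℝ (⊤ : ℕ∞) fun x => g x v w)
    (J : Pt m → Pt m →ₗ[ℝ] Pt m)
    (hJ2 : ∀ x u, J x (J x u) = -u)
    (hJg : ∀ x u v, g x (J x u) (J x v) = g x u v)
    (hJs : ∀ v : Pt m, ContDiff ℝ (⊤ : ℕ∞) fun x => J x v)
    (X : Fin nn → Pt m → Pt m)
    (hX : ∀ x i j, g x (X i x) (X j x) = if i = j then (1 : ℝ) else 0)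
    (hXJ : ∀ x i j, g x (X i x) (J x (X j x)) = 0)
    (hXspan : ∀ x u, u = (∑ i, g x u (X i x) • X i x)
      + ∑ i, g x u (J x (X i x)) • J x (X i x)) :
    ∃ (Γ : Conn m) (α : Pt m → Pt m → ℝ), IsWeyl g Γ α ∧
      (∀ x, trDJ Γ J X x = 0) ∧
      (∀ x u, α x u = -(((m : ℝ) - 2)⁻¹) * leeJ g J X x u) ∧
      ∀ (Γ' : Conn m) (α' : Pt m → Pt m → ℝ), IsWeyl g Γ' α' →
        (∀ x, trDJ Γ' J X x = 0) → Γ' = Γ := by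
  have hm2 : (m : ℝ) - 2 = 2 * (nn : ℝ) - 2 := by rw [hm]; push_cast; ring
  have hnnr : (2 : ℝ) ≤ (nn : ℝ) := by exact_mod_cast hnn
  have hm2ne : (m : ℝ) - 2 ≠ 0 := by rw [hm2]; nlinarith
  set lam : Pt m → Pt m → ℝ := fun x u => -(((m : ℝ) - 2)⁻¹) * leeJ g J X x u with hlamdef
  have hlam : ∀ x, IsLinearMap ℝ (lam x) := by
    intro x
    have hl := lee_linear (X := X) hgsm hJs x
    constructor
    · intro u u'
      show -(((m : ℝ) - 2)⁻¹) * leeJ g J X x (u + u') = _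
      rw [hl.map_add]; ring
    · intro t u
      show -(((m : ℝ) - 2)⁻¹) * leeJ g J X x (t • u) = _
      rw [hl.map_smul, smul_eq_mul, smul_eq_mul]; ring
  have hleelam : ∀ x u, lam x u = -(((m : ℝ) - 2)⁻¹) * leeJ g J X x u := fun x u => rfl
  refine ⟨GammaW g J X lam hgsm hlam, lam, GammaW_weyl hgs hgsm hlam hXspan, ?_, hleelam, ?_⟩
  · -- trace-free
    intro x
    apply nondeg hgp x
    intro c0
    have h := core hgs hgsm hJ2 hJg hJs hX hXJ hXspan (GammaW g J X lam hgsm hlam) hlam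
      (fun x u v w => GammaW_repro hgs hgsm hlam hXspan x u v w) x c0
    rw [h, hleelam x (J x c0), hm2]
    have hne : (2 * (nn : ℝ) - 2) ≠ 0 := by rw [← hm2]; exact hm2ne
    have hne1 : (nn : ℝ) - 1 ≠ 0 := by intro h; linarith
    field_simp
    ring
  · -- uniqueness
    intro Γ' α' hW' hT'
    have hlin' : ∀ x, IsLinearMap ℝ (α' x) :=
      fun x => weyl_lin hgs hX ⟨0, by omega⟩ Γ' α' hW' x
    have hkos' : ∀ x u v w, g x (Γ' x u v) w = betaG g α' x u v w :=
      fun x u v w => weyl_koszul hgs Γ' α' hW' x u v w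
    have hαeq : ∀ x u, α' x u = lam x u := by
      intro x u
      have hc : J x (-(J x u)) = u := by rw [map_neg, hJ2]; simp
      have h := core hgs hgsm hJ2 hJg hJs hX hXJ hXspan Γ' hlin' hkos' x (-(J x u))
      rw [hc, hT' x] at h
      have h0 : g x (0 : Pt m) (-(J x u)) = (0 : ℝ) := by rw [map_zero]; rfl
      rw [h0] at h
      have h2 : (2 * (nn : ℝ) - 2) * α' x u = -leeJ g J X x u := by linarith
      rw [hleelam x u, hm2]
      have hne : (2 * (nn : ℝ) - 2) ≠ 0 := by rw [← hm2]; exact hm2ne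
      have hne1 : (nn : ℝ) - 1 ≠ 0 := by intro h; linarith
      field_simp
      linarith
    funext x
    refine LinearMap.ext fun u => LinearMap.ext fun v => ?_
    have hgw : ∀ w, g x (Γ' x u v) w = g x (GammaW g J X lam hgsm hlam x u v) w := by
      intro w
      rw [hkos' x u v w, GammaW_repro hgs hgsm hlam hXspan x u v w]
      unfold betaG
      rw [hαeq x u, hαeq x v, hαeq x w]
    have hsub : ∀ w, g x (Γ' x u v - GammaW g J X lam hgsm hlam x u v) w = 0 := by
      intro w
      rw [map_sub]
      simp only [LinearMap.sub_apply]
      rw [hgw w]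
      ring
    have hz := nondeg hgp x _ hsub
    exact sub_eq_zero.mp hz
end
end

section
/- Let (M, c_M, J^M) and (N, c_N, J^N) be almost Hermitian manifolds equipped with their canonical Weyl connections D^M, D^N (characterized by tr_{c}(D J) = 0). If φ : (M,J^M) → (N,J^N) is a holomorphic map which is horizontally weakly conformal with nowhere degenerate fibres, then φ is a harmonic map with respect to c_M, D^M, D^N, and hence a harmonic morphism between the Weyl spaces. -/
noncomputable section
open scoped BigOperators

lemma IsLinearMap.map_sum' {E F : Type*} [AddCommGroup E] [Module ℝ E] [AddCommGroup F]
    [Module ℝ F] {f : E → F} (h : IsLinearMap ℝ f) {ι : Type*} (s : Finset ι) (g : ι → E) :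
    f (∑ i ∈ s, g i) = ∑ i ∈ s, f (g i) :=
  map_sum (IsLinearMap.mk' f h) g s

/-- expansion of a vector in an orthonormal family. -/
lemma expand_frame {m : ℕ} (g : Met m) (hgp : MetPos g) (x : Pt m) (v : Fin m → Pt m)
    (hv : ∀ i j, g x (v i) (v j) = if i = j then (1:ℝ) else 0) (u : Pt m) :
    u = ∑ j, g x u (v j) • v j := by
  have hli : LinearIndependent ℝ v := by
    rw [linearIndependent_iff']
    intro s c hc i hi
    have := congrArg (fun w => g x w (v i)) hc
    simp only [map_sum, map_smul, LinearMap.coe_sum, Finset.sum_apply, LinearMap.smul_apply,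
      smul_eq_mul, map_zero, LinearMap.zero_apply] at this
    rw [Finset.sum_eq_single i] at this
    · simpa [hv i i] using this
    · intro j _ hj; simp [hv j i, hj]
    · intro h; exact absurd hi h
  have hcard : Fintype.card (Fin m) = Module.finrank ℝ (Pt m) := by
    simp [finrank_euclideanSpace_fin]
  have hspan : Submodule.span ℝ (Set.range v) = ⊤ :=
    hli.span_eq_top_of_card_eq_finrank' hcard
  set r := u - ∑ j, g x u (v j) • v j with hr
  have horth : ∀ j, g x r (v j) = 0 := by
    intro j
    simp only [hr, map_sub, map_sum, map_smul, LinearMap.sub_apply, LinearMap.coe_sum,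
      Finset.sum_apply, LinearMap.smul_apply, smul_eq_mul]
    rw [Finset.sum_eq_single j]
    · simp [hv j j]
    · intro k _ hk; simp [hv k j, hk]
    · intro h; exact absurd (Finset.mem_univ j) h
  have horth' : ∀ w, g x r w = 0 := by
    intro w
    have hw : w ∈ Submodule.span ℝ (Set.range v) := hspan ▸ Submodule.mem_top
    induction hw using Submodule.span_induction with
    | mem w hw => obtain ⟨j, rfl⟩ := hw; exact horth j
    | zero => simp
    | add a b _ _ ha hb => simp [ha, hb]
    | smul c a _ ha => simp [ha]
  have h0 : r = 0 := by
    by_contra h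
    exact (hgp x r h).ne' (horth' r)
  rw [hr, sub_eq_zero] at h0
  exact h0

/-- Core trace lemma. -/
lemma sum_B_eq {n k : ℕ} {E : Type*} [AddCommGroup E] [Module ℝ E]
    (B : Pt n → Pt n → E)
    (hBl : ∀ w, IsLinearMap ℝ (fun u => B u w)) (hBr : ∀ u, IsLinearMap ℝ (B u))
    (v : Fin n → Pt n) (w : Fin k → Pt n) (c : Fin k → Fin n → ℝ)
    (hw : ∀ i, w i = ∑ j, c i j • v j) (Λ : ℝ)
    (hc : ∀ j j', (∑ i, c i j * c i j') = Λ * (if j = j' then (1:ℝ) else 0)) :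
    ∑ i, B (w i) (w i) = Λ • ∑ j, B (v j) (v j) := by
  have step : ∀ i, B (w i) (w i) = ∑ j, ∑ j', (c i j * c i j') • B (v j) (v j') := by
    intro i
    rw [hw i]
    rw [(hBl (∑ j, c i j • v j)).map_sum' Finset.univ (fun j => c i j • v j)]
    refine Finset.sum_congr rfl fun j _ => ?_
    rw [(hBl _).map_smul]
    rw [(hBr (v j)).map_sum' Finset.univ (fun j' => c i j' • v j')]
    rw [Finset.smul_sum]
    refine Finset.sum_congr rfl fun j' _ => ?_
    rw [(hBr (v j)).map_smul, smul_smul]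
  calc ∑ i, B (w i) (w i) = ∑ i, ∑ j, ∑ j', (c i j * c i j') • B (v j) (v j') :=
        Finset.sum_congr rfl fun i _ => step i
    _ = ∑ j, ∑ j', (∑ i, c i j * c i j') • B (v j) (v j') := by
        rw [Finset.sum_comm]
        refine Finset.sum_congr rfl fun j _ => ?_
        rw [Finset.sum_comm]
        refine Finset.sum_congr rfl fun j' _ => ?_
        rw [← Finset.sum_smul]
    _ = Λ • ∑ j, B (v j) (v j) := by
        rw [Finset.smul_sum]
        refine Finset.sum_congr rfl fun j _ => ?_
        rw [Finset.sum_eq_single j]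
        · rw [hc j j]; simp [mul_smul]
        · intro j' _ hj'; rw [hc j j']; simp [Ne.symm hj']
        · intro h; exact absurd (Finset.mem_univ j) h

/-- trace of a bilinear map is the same in any two orthonormal frames. -/
lemma trace_indep {n : ℕ} {E : Type*} [AddCommGroup E] [Module ℝ E]
    (g : Met n) (hgs : MetSymm g) (hgp : MetPos g) (x : Pt n) (v f : Fin n → Pt n)
    (hv : ∀ i j, g x (v i) (v j) = if i = j then (1:ℝ) else 0)
    (hf : ∀ i j, g x (f i) (f j) = if i = j then (1:ℝ) else 0)
    (B : Pt n → Pt n → E)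
    (hBl : ∀ w, IsLinearMap ℝ (fun u => B u w)) (hBr : ∀ u, IsLinearMap ℝ (B u)) :
    ∑ i, B (f i) (f i) = ∑ j, B (v j) (v j) := by
  have hc : ∀ j j', (∑ i, g x (f i) (v j) * g x (f i) (v j'))
      = 1 * (if j = j' then (1:ℝ) else 0) := by
    intro j j'
    have hexp := expand_frame g hgp x f hf (v j)
    have : g x (v j) (v j') = ∑ i, g x (v j) (f i) * g x (f i) (v j') := by
      conv_lhs => rw [hexp]
      simp only [map_sum, map_smul, LinearMap.coe_sum, Finset.sum_apply,
        LinearMap.smul_apply, smul_eq_mul]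
    rw [one_mul, ← hv j j', this]
    refine Finset.sum_congr rfl fun i _ => ?_
    rw [hgs x (v j) (f i)]
  have := sum_B_eq B hBl hBr v f (fun i j => g x (f i) (v j))
    (fun i => expand_frame g hgp x v hv (f i)) 1 hc
  simpa using this

/-- trace over the pushed-forward frame equals `Λ` times the trace over the target frame. -/
lemma conf_sum {n k : ℕ} {E : Type*} [AddCommGroup E] [Module ℝ E]
    (h : Met n) (hhs : MetSymm h) (hhp : MetPos h) (y : Pt n) (ε : Fin n → Pt n)
    (hε : ∀ i j, h y (ε i) (ε j) = if i = j then (1:ℝ) else 0)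
    (w : Fin k → Pt n) (Λ : ℝ)
    (hw : ∀ j j', (∑ i, h y (ε j) (w i) * h y (ε j') (w i)) = Λ * (if j = j' then (1:ℝ) else 0))
    (B : Pt n → Pt n → E)
    (hBl : ∀ u', IsLinearMap ℝ (fun u => B u u')) (hBr : ∀ u, IsLinearMap ℝ (B u)) :
    ∑ i, B (w i) (w i) = Λ • ∑ j, B (ε j) (ε j) := by
  refine sum_B_eq B hBl hBr ε w (fun i j => h y (w i) (ε j))
    (fun i => expand_frame h hhp y ε hε (w i)) Λ ?_
  intro j j'
  rw [← hw j j']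
  refine Finset.sum_congr rfl fun i _ => ?_
  rw [hhs y (w i) (ε j), hhs y (w i) (ε j')]

section CalcHelp
variable {a : ℕ} {F : Type*} [NormedAddCommGroup F] [NormedSpace ℝ F]

lemma hasFDerivAt_fderiv_apply (ψ : Pt a → F) (hψ : ContDiff ℝ (⊤ : ℕ∞) ψ) (x v : Pt a) :
    HasFDerivAt (fun p => fderiv ℝ ψ p v)
      ((ContinuousLinearMap.apply ℝ F v).comp (fderiv ℝ (fderiv ℝ ψ) x)) x := by
  have h1 : HasFDerivAt (fderiv ℝ ψ) (fderiv ℝ (fderiv ℝ ψ) x) x :=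
    (((hψ.fderiv_right (m := 1) (by exact WithTop.coe_le_coe.mpr le_top)).differentiable one_ne_zero) x).hasFDerivAt
  exact (ContinuousLinearMap.apply ℝ F v).hasFDerivAt.comp x h1

lemma fderiv_fderiv_apply (ψ : Pt a → F) (hψ : ContDiff ℝ (⊤ : ℕ∞) ψ) (x u v : Pt a) :
    fderiv ℝ (fun p => fderiv ℝ ψ p v) x u = fderiv ℝ (fderiv ℝ ψ) x u v := by
  rw [(hasFDerivAt_fderiv_apply ψ hψ x v).fderiv]; rfl

lemma fderiv_fderiv_symm (ψ : Pt a → F) (hψ : ContDiff ℝ (⊤ : ℕ∞) ψ) (x u v : Pt a) :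
    fderiv ℝ (fderiv ℝ ψ) x u v = fderiv ℝ (fderiv ℝ ψ) x v u :=
  (hψ.contDiffAt.isSymmSndFDerivAt (by rw [minSmoothness_of_isRCLikeNormedField]; exact WithTop.coe_le_coe.mpr le_top)) u v

def clmOf {n : ℕ} (J : Pt n → Pt n →ₗ[ℝ] Pt n) : Pt n → Pt n →L[ℝ] Pt n :=
  fun y => (J y).toContinuousLinearMap

lemma clmOf_contDiff {n : ℕ} (J : Pt n → Pt n →ₗ[ℝ] Pt n)
    (hJ : ∀ v, ContDiff ℝ (⊤ : ℕ∞) fun y => J y v) : ContDiff ℝ (⊤ : ℕ∞) (clmOf J) := by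
  rw [contDiff_clm_apply_iff]; intro v; exact hJ v

lemma fderiv_J_apply {n : ℕ} (J : Pt n → Pt n →ₗ[ℝ] Pt n)
    (hJ : ∀ v, ContDiff ℝ (⊤ : ℕ∞) fun y => J y v) (x u v : Pt n) :
    fderiv ℝ (fun p => J p v) x u = (fderiv ℝ (clmOf J) x u) v := by
  have h1 : HasFDerivAt (clmOf J) (fderiv ℝ (clmOf J) x) x :=
    (((clmOf_contDiff J hJ).differentiable (by simp)) x).hasFDerivAt
  have h3 : HasFDerivAt (fun p => J p v)
      ((ContinuousLinearMap.apply ℝ (Pt n) v).comp (fderiv ℝ (clmOf J) x)) x :=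
    (ContinuousLinearMap.apply ℝ (Pt n) v).hasFDerivAt.comp x h1
  rw [h3.fderiv]; rfl

/-- `DJof` rewritten with the CLM-valued derivative. -/
lemma DJof_eq {n : ℕ} (Γ : Conn n) (J : Pt n → Pt n →ₗ[ℝ] Pt n)
    (hJ : ∀ v, ContDiff ℝ (⊤ : ℕ∞) fun y => J y v) (x u v : Pt n) :
    DJof Γ J x u v = (fderiv ℝ (clmOf J) x u) v + Γ x u (J x v) - J x (Γ x u v) := by
  rw [DJof, fderiv_J_apply J hJ]

lemma DJof_linear_left {n : ℕ} (Γ : Conn n) (J : Pt n → Pt n →ₗ[ℝ] Pt n)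
    (hJ : ∀ v, ContDiff ℝ (⊤ : ℕ∞) fun y => J y v) (x v : Pt n) :
    IsLinearMap ℝ (fun u => DJof Γ J x u v) := by
  constructor <;> intros <;>
    simp only [DJof_eq Γ J hJ, map_add, map_smul, LinearMap.add_apply, LinearMap.smul_apply,
      ContinuousLinearMap.add_apply, ContinuousLinearMap.coe_smul', Pi.smul_apply] <;>
    [skip; skip] <;> module

lemma DJof_linear_right {n : ℕ} (Γ : Conn n) (J : Pt n → Pt n →ₗ[ℝ] Pt n)
    (hJ : ∀ v, ContDiff ℝ (⊤ : ℕ∞) fun y => J y v) (x u : Pt n) :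
    IsLinearMap ℝ (fun v => DJof Γ J x u v) := by
  constructor <;> intros <;>
    simp only [DJof_eq Γ J hJ, map_add, map_smul] <;> module

end CalcHelp

section MainHelp
variable {m n : ℕ}


lemma sff_expand (ΓM : Conn m) (ΓN : Conn n) (φ : Pt m → Pt n) (hφ : ContDiff ℝ (⊤ : ℕ∞) φ)
    (x u v : Pt m) :
    sff ΓM ΓN φ x u v = fderiv ℝ (fderiv ℝ φ) x u v
      + ΓN (φ x) (fderiv ℝ φ x u) (fderiv ℝ φ x v) - fderiv ℝ φ x (ΓM x u v) := by
  rw [sff, fderiv_fderiv_apply φ hφ]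

lemma sff_symm (ΓM : Conn m) (ΓN : Conn n) (hM : ∀ x u v, ΓM x u v = ΓM x v u)
    (hN : ∀ y u v, ΓN y u v = ΓN y v u) (φ : Pt m → Pt n) (hφ : ContDiff ℝ (⊤ : ℕ∞) φ)
    (x u v : Pt m) : sff ΓM ΓN φ x u v = sff ΓM ΓN φ x v u := by
  rw [sff_expand _ _ _ hφ, sff_expand _ _ _ hφ, fderiv_fderiv_symm φ hφ,
    hM x u v, hN (φ x) (fderiv ℝ φ x u) (fderiv ℝ φ x v)]

lemma sff_linear_left (ΓM : Conn m) (ΓN : Conn n) (φ : Pt m → Pt n) (hφ : ContDiff ℝ (⊤ : ℕ∞) φ)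
    (x v : Pt m) : IsLinearMap ℝ (fun u => sff ΓM ΓN φ x u v) := by
  constructor <;> intros <;>
    simp only [sff_expand _ _ _ hφ, map_add, map_smul, LinearMap.add_apply,
      LinearMap.smul_apply, ContinuousLinearMap.add_apply, ContinuousLinearMap.coe_smul',
      Pi.smul_apply] <;> module

lemma sff_linear_right (ΓM : Conn m) (ΓN : Conn n) (φ : Pt m → Pt n) (hφ : ContDiff ℝ (⊤ : ℕ∞) φ)
    (x u : Pt m) : IsLinearMap ℝ (fun v => sff ΓM ΓN φ x u v) := by
  constructor <;> intros <;>
    simp only [sff_expand _ _ _ hφ, map_add, map_smul] <;> module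

lemma sff_star (ΓM : Conn m) (ΓN : Conn n)
    (JM : Pt m → Pt m →ₗ[ℝ] Pt m) (JN : Pt n → Pt n →ₗ[ℝ] Pt n)
    (hJMs : ∀ v : Pt m, ContDiff ℝ (⊤ : ℕ∞) fun x => JM x v)
    (hJNs : ∀ v : Pt n, ContDiff ℝ (⊤ : ℕ∞) fun y => JN y v)
    (φ : Pt m → Pt n) (hφ : ContDiff ℝ (⊤ : ℕ∞) φ)
    (hol : ∀ x u, fderiv ℝ φ x (JM x u) = JN (φ x) (fderiv ℝ φ x u))
    (x u v : Pt m) :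
    sff ΓM ΓN φ x u (JM x v) = DJof ΓN JN (φ x) (fderiv ℝ φ x u) (fderiv ℝ φ x v)
      - fderiv ℝ φ x (DJof ΓM JM x u v) + JN (φ x) (sff ΓM ΓN φ x u v) := by
  have hdφ : HasFDerivAt φ (fderiv ℝ φ x) x := (hφ.differentiable (by simp) x).hasFDerivAt
  have hf2 : HasFDerivAt (fderiv ℝ φ) (fderiv ℝ (fderiv ℝ φ) x) x :=
    ((hφ.fderiv_right (m := 1) (by exact WithTop.coe_le_coe.mpr le_top)).differentiable one_ne_zero x).hasFDerivAt
  have hJMd : HasFDerivAt (fun p => JM p v) (fderiv ℝ (fun p => JM p v) x) x :=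
    (((hJMs v).differentiable (by simp)) x).hasFDerivAt
  have hL := hf2.clm_apply hJMd
  have hJNc : HasFDerivAt (clmOf JN) (fderiv ℝ (clmOf JN) (φ x)) (φ x) :=
    ((clmOf_contDiff JN hJNs).differentiable (by simp) (φ x)).hasFDerivAt
  have hc2 : HasFDerivAt (fun p => clmOf JN (φ p))
      ((fderiv ℝ (clmOf JN) (φ x)).comp (fderiv ℝ φ x)) x := hJNc.comp x hdφ
  have hu2 := hasFDerivAt_fderiv_apply φ hφ x v
  have hR := hc2.clm_apply hu2
  have heq : (fun p => fderiv ℝ φ p (JM p v)) = (fun p => clmOf JN (φ p) (fderiv ℝ φ p v)) :=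
    funext fun p => hol p v
  rw [heq] at hL
  have hder := hL.unique hR
  have dagger : fderiv ℝ φ x (fderiv ℝ (clmOf JM) x u v) + fderiv ℝ (fderiv ℝ φ) x u (JM x v)
      = JN (φ x) (fderiv ℝ (fderiv ℝ φ) x u v)
        + fderiv ℝ (clmOf JN) (φ x) (fderiv ℝ φ x u) (fderiv ℝ φ x v) := by
    have h1 := congrFun (congrArg (fun (L : Pt m →L[ℝ] Pt n) => (L : Pt m → Pt n)) hder) u
    simp only [ContinuousLinearMap.add_apply, ContinuousLinearMap.coe_comp',
      Function.comp_apply, ContinuousLinearMap.flip_apply,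
      ContinuousLinearMap.apply_apply, ContinuousLinearMap.coe_coe] at h1
    rw [← fderiv_J_apply JM hJMs x u v]
    exact h1
  have hA : fderiv ℝ (fderiv ℝ φ) x u (JM x v)
      = JN (φ x) (fderiv ℝ (fderiv ℝ φ) x u v)
        + fderiv ℝ (clmOf JN) (φ x) (fderiv ℝ φ x u) (fderiv ℝ φ x v)
        - fderiv ℝ φ x (fderiv ℝ (clmOf JM) x u v) := by
    rw [eq_sub_iff_add_eq, add_comm _ (fderiv ℝ φ x (fderiv ℝ (clmOf JM) x u v))]
    exact dagger
  rw [sff_expand _ _ _ hφ, sff_expand _ _ _ hφ, DJof_eq ΓN JN hJNs, DJof_eq ΓM JM hJMs,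
    hA, hol x v]
  simp only [map_add, map_sub]
  rw [hol x ((ΓM x u) v)]
  abel

end MainHelp

/-- A holomorphic horizontally weakly conformal map with nowhere degenerate fibres
between almost Hermitian manifolds endowed with their canonical Weyl connections
(`tr_c(DJ) = 0`) is a harmonic map, and hence a harmonic morphism. -/
theorem stmt15 (m n : ℕ)
    (g : Met m) (hgs : MetSymm g) (hgp : MetPos g)
    (e : Fin m → Pt m → Pt m) (he : OrthFrame g e)
    (h : Met n) (hhs : MetSymm h) (hhp : MetPos h)
    (ε : Fin n → Pt n → Pt n) (hε : OrthFrame h ε)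
    (JM : Pt m → Pt m →ₗ[ℝ] Pt m) (JN : Pt n → Pt n →ₗ[ℝ] Pt n)
    (hJM2 : ∀ x u, JM x (JM x u) = -u) (hJN2 : ∀ y u, JN y (JN y u) = -u)
    (hJMg : ∀ x u v, g x (JM x u) (JM x v) = g x u v)
    (hJNh : ∀ y u v, h y (JN y u) (JN y v) = h y u v)
    (hJMs : ∀ v : Pt m, ContDiff ℝ (⊤ : ℕ∞) fun x => JM x v)
    (hJNs : ∀ v : Pt n, ContDiff ℝ (⊤ : ℕ∞) fun y => JN y v)
    (ΓM : Conn m) (αM : Pt m → Pt m → ℝ) (hWM : IsWeyl g ΓM αM)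
    (ΓN : Conn n) (αN : Pt n → Pt n → ℝ) (hWN : IsWeyl h ΓN αN)
    (hcanM : ∀ x, (∑ i, DJof ΓM JM x (e i x) (e i x)) = 0)
    (hcanN : ∀ y, (∑ j, DJof ΓN JN y (ε j y) (ε j y)) = 0)
    (φ : Pt m → Pt n) (hφ : ContDiff ℝ (⊤ : ℕ∞) φ)
    (hol : ∀ x u, fderiv ℝ φ x (JM x u) = JN (φ x) (fderiv ℝ φ x u))
    (hwc : ∃ Λ : Pt m → ℝ, (∀ x, Λ x ≠ 0) ∧ ∀ x w w',
      (∑ i, h (φ x) w (fderiv ℝ φ x (e i x)) * h (φ x) w' (fderiv ℝ φ x (e i x)))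
        = Λ x * h (φ x) w w') :
    (∀ x, tension ΓM ΓN φ e x = 0) ∧
    ∀ f : Pt n → ℝ, ContDiff ℝ (⊤ : ℕ∞) f → (∀ y, lap ΓN ε f y = 0) →
      ∀ x, lap ΓM e (f ∘ φ) x = 0 := by
  obtain ⟨Λ, hΛ0, hΛ⟩ := hwc
  have hgsym := hWM.1
  have hhsym := hWN.1
  -- frames
  have hF : ∀ x i j, g x (JM x (e i x)) (JM x (e j x)) = if i = j then (1:ℝ) else 0 :=
    fun x i j => by rw [hJMg]; exact he x i j
  have hJε : ∀ y i j, h y (JN y (ε i y)) (JN y (ε j y)) = if i = j then (1:ℝ) else 0 :=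
    fun y i j => by rw [hJNh]; exact hε y i j
  -- bilinearity packages
  have hDJNl : ∀ y v', IsLinearMap ℝ (fun u' => DJof ΓN JN y u' v') :=
    fun y v' => DJof_linear_left ΓN JN hJNs y v'
  have hDJNr : ∀ y u', IsLinearMap ℝ (fun v' => DJof ΓN JN y u' v') :=
    fun y u' => DJof_linear_right ΓN JN hJNs y u'
  have hDJMl : ∀ x v', IsLinearMap ℝ (fun u' => DJof ΓM JM x u' v') :=
    fun x v' => DJof_linear_left ΓM JM hJMs x v'
  have hDJMr : ∀ x u', IsLinearMap ℝ (fun v' => DJof ΓM JM x u' v') :=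
    fun x u' => DJof_linear_right ΓM JM hJMs x u'
  have hB2l : ∀ y v', IsLinearMap ℝ (fun u' => DJof ΓN JN y (JN y u') (JN y v')) :=
    fun y v' =>
      ⟨fun a b => by rw [map_add]; exact (hDJNl y (JN y v')).map_add _ _,
       fun c a => by rw [map_smul]; exact (hDJNl y (JN y v')).map_smul _ _⟩
  have hB2r : ∀ y u', IsLinearMap ℝ (fun v' => DJof ΓN JN y (JN y u') (JN y v')) :=
    fun y u' =>
      ⟨fun a b => by rw [map_add]; exact (hDJNr y (JN y u')).map_add _ _,
       fun c a => by rw [map_smul]; exact (hDJNr y (JN y u')).map_smul _ _⟩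
  -- conformal trace transfer
  have hconf : ∀ (x : Pt m) (B : Pt n → Pt n → Pt n),
      (∀ u', IsLinearMap ℝ (fun u => B u u')) → (∀ u, IsLinearMap ℝ (B u)) →
      ∑ i, B (fderiv ℝ φ x (e i x)) (fderiv ℝ φ x (e i x))
        = Λ x • ∑ j, B (ε j (φ x)) (ε j (φ x)) := by
    intro x B hBl hBr
    exact conf_sum h hhs hhp (φ x) (fun j => ε j (φ x)) (hε (φ x))
      (fun i => fderiv ℝ φ x (e i x)) (Λ x)
      (fun j j' => by rw [hΛ x (ε j (φ x)) (ε j' (φ x)), hε (φ x) j j']) B hBl hBr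
  -- main claim: the tension field vanishes
  have key : ∀ x, tension ΓM ΓN φ e x = 0 := by
    intro x
    have hS1 : ∑ i, DJof ΓN JN (φ x) (fderiv ℝ φ x (e i x)) (fderiv ℝ φ x (e i x)) = 0 := by
      rw [hconf x _ (hDJNl (φ x)) (hDJNr (φ x)), hcanN (φ x), smul_zero]
    have hS2 : ∑ i, DJof ΓN JN (φ x) (fderiv ℝ φ x (JM x (e i x)))
        (fderiv ℝ φ x (JM x (e i x))) = 0 := by
      have h1 : ∀ i : Fin m, fderiv ℝ φ x (JM x (e i x)) = JN (φ x) (fderiv ℝ φ x (e i x)) :=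
        fun i => hol x (e i x)
      calc ∑ i, DJof ΓN JN (φ x) (fderiv ℝ φ x (JM x (e i x))) (fderiv ℝ φ x (JM x (e i x)))
          = ∑ i, DJof ΓN JN (φ x) (JN (φ x) (fderiv ℝ φ x (e i x)))
              (JN (φ x) (fderiv ℝ φ x (e i x))) :=
            Finset.sum_congr rfl fun i _ => by rw [h1 i]
        _ = Λ x • ∑ j, DJof ΓN JN (φ x) (JN (φ x) (ε j (φ x))) (JN (φ x) (ε j (φ x))) :=
            hconf x (fun u v => DJof ΓN JN (φ x) (JN (φ x) u) (JN (φ x) v))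
              (hB2l (φ x)) (hB2r (φ x))
        _ = Λ x • ∑ j, DJof ΓN JN (φ x) (ε j (φ x)) (ε j (φ x)) := by
            rw [trace_indep h hhs hhp (φ x) (fun j => ε j (φ x))
              (fun j => JN (φ x) (ε j (φ x))) (hε (φ x)) (hJε (φ x))
              (fun u v => DJof ΓN JN (φ x) u v) (hDJNl (φ x)) (hDJNr (φ x))]
        _ = 0 := by rw [hcanN (φ x), smul_zero]
    have hSM : ∑ i, DJof ΓM JM x (JM x (e i x)) (JM x (e i x)) = 0 := by
      rw [trace_indep g hgs hgp x (fun i => e i x) (fun i => JM x (e i x)) (he x) (hF x)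
        (fun u v => DJof ΓM JM x u v) (hDJMl x) (hDJMr x), hcanM x]
    have hTf : ∑ i, sff ΓM ΓN φ x (JM x (e i x)) (JM x (e i x))
        = ∑ i, sff ΓM ΓN φ x (e i x) (e i x) :=
      trace_indep g hgs hgp x (fun i => e i x) (fun i => JM x (e i x)) (he x) (hF x)
        (fun u v => sff ΓM ΓN φ x u v) (fun v => sff_linear_left ΓM ΓN φ hφ x v)
        (fun u => sff_linear_right ΓM ΓN φ hφ x u)
    have hA : ∑ i, sff ΓM ΓN φ x (e i x) (JM x (e i x))
        = JN (φ x) (∑ i, sff ΓM ΓN φ x (e i x) (e i x)) := by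
      calc ∑ i, sff ΓM ΓN φ x (e i x) (JM x (e i x))
          = ∑ i, (DJof ΓN JN (φ x) (fderiv ℝ φ x (e i x)) (fderiv ℝ φ x (e i x))
              - fderiv ℝ φ x (DJof ΓM JM x (e i x) (e i x))
              + JN (φ x) (sff ΓM ΓN φ x (e i x) (e i x))) :=
            Finset.sum_congr rfl fun i _ =>
              sff_star ΓM ΓN JM JN hJMs hJNs φ hφ hol x (e i x) (e i x)
        _ = (∑ i, DJof ΓN JN (φ x) (fderiv ℝ φ x (e i x)) (fderiv ℝ φ x (e i x)))
              - fderiv ℝ φ x (∑ i, DJof ΓM JM x (e i x) (e i x))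
              + JN (φ x) (∑ i, sff ΓM ΓN φ x (e i x) (e i x)) := by
            rw [Finset.sum_add_distrib, Finset.sum_sub_distrib, map_sum, map_sum]
        _ = JN (φ x) (∑ i, sff ΓM ΓN φ x (e i x) (e i x)) := by
            rw [hS1, hcanM x]; simp
    have hB : ∑ i, sff ΓM ΓN φ x (JM x (e i x)) (JM x (JM x (e i x)))
        = JN (φ x) (∑ i, sff ΓM ΓN φ x (e i x) (e i x)) := by
      calc ∑ i, sff ΓM ΓN φ x (JM x (e i x)) (JM x (JM x (e i x)))
          = ∑ i, (DJof ΓN JN (φ x) (fderiv ℝ φ x (JM x (e i x))) (fderiv ℝ φ x (JM x (e i x)))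
              - fderiv ℝ φ x (DJof ΓM JM x (JM x (e i x)) (JM x (e i x)))
              + JN (φ x) (sff ΓM ΓN φ x (JM x (e i x)) (JM x (e i x)))) :=
            Finset.sum_congr rfl fun i _ =>
              sff_star ΓM ΓN JM JN hJMs hJNs φ hφ hol x (JM x (e i x)) (JM x (e i x))
        _ = (∑ i, DJof ΓN JN (φ x) (fderiv ℝ φ x (JM x (e i x))) (fderiv ℝ φ x (JM x (e i x))))
              - fderiv ℝ φ x (∑ i, DJof ΓM JM x (JM x (e i x)) (JM x (e i x)))
              + JN (φ x) (∑ i, sff ΓM ΓN φ x (JM x (e i x)) (JM x (e i x))) := by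
            rw [Finset.sum_add_distrib, Finset.sum_sub_distrib, map_sum, map_sum]
        _ = JN (φ x) (∑ i, sff ΓM ΓN φ x (e i x) (e i x)) := by
            rw [hS2, hSM, hTf]; simp
    have hC : ∑ i, sff ΓM ΓN φ x (JM x (e i x)) (JM x (JM x (e i x)))
        = -(JN (φ x) (∑ i, sff ΓM ΓN φ x (e i x) (e i x))) := by
      calc ∑ i, sff ΓM ΓN φ x (JM x (e i x)) (JM x (JM x (e i x)))
          = ∑ i, -(sff ΓM ΓN φ x (JM x (e i x)) (e i x)) :=
            Finset.sum_congr rfl fun i _ => by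
              rw [hJM2 x (e i x)]
              exact (sff_linear_right ΓM ΓN φ hφ x (JM x (e i x))).map_neg _
        _ = -∑ i, sff ΓM ΓN φ x (e i x) (JM x (e i x)) := by
            rw [Finset.sum_neg_distrib]
            congr 1
            exact Finset.sum_congr rfl fun i _ =>
              sff_symm ΓM ΓN hWM.1 hWN.1 φ hφ x (JM x (e i x)) (e i x)
        _ = -(JN (φ x) (∑ i, sff ΓM ΓN φ x (e i x) (e i x))) := by rw [hA]
    have hx : JN (φ x) (∑ i, sff ΓM ΓN φ x (e i x) (e i x))
        = -(JN (φ x) (∑ i, sff ΓM ΓN φ x (e i x) (e i x))) := hB.symm.trans hC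
    have h2 : (2:ℝ) • JN (φ x) (∑ i, sff ΓM ΓN φ x (e i x) (e i x)) = 0 := by
      rw [two_smul]
      nth_rewrite 2 [hx]
      exact add_neg_cancel _
    have hJNT : JN (φ x) (∑ i, sff ΓM ΓN φ x (e i x) (e i x)) = 0 :=
      (smul_eq_zero.mp h2).resolve_left (by norm_num)
    have h3 : -(∑ i, sff ΓM ΓN φ x (e i x) (e i x)) = 0 := by
      rw [← hJN2 (φ x) (∑ i, sff ΓM ΓN φ x (e i x) (e i x)), hJNT, map_zero]
    exact neg_eq_zero.mp h3
  refine ⟨key, ?_⟩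
  intro f hf hlap x
  have hdφ : HasFDerivAt φ (fderiv ℝ φ x) x := (hφ.differentiable (by simp) x).hasFDerivAt
  have hfd : ∀ p, fderiv ℝ (f ∘ φ) p = (fderiv ℝ f (φ p)).comp (fderiv ℝ φ p) :=
    fun p => fderiv_comp p ((hf.differentiable (by simp)) (φ p)) ((hφ.differentiable (by simp)) p)
  have hess_expand : ∀ u' v', hessian ΓN f (φ x) u' v'
      = fderiv ℝ (fderiv ℝ f) (φ x) u' v' - fderiv ℝ f (φ x) (ΓN (φ x) u' v') := by
    intro u' v'
    rw [hessian, fderiv_fderiv_apply f hf]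
  have hcomp : ∀ u v, hessian ΓM (f ∘ φ) x u v
      = hessian ΓN f (φ x) (fderiv ℝ φ x u) (fderiv ℝ φ x v)
        + fderiv ℝ f (φ x) (sff ΓM ΓN φ x u v) := by
    intro u v
    have heq2 : (fun p => fderiv ℝ (f ∘ φ) p v)
        = (fun p => (fderiv ℝ f (φ p)) ((fderiv ℝ φ p) v)) :=
      funext fun p => by rw [hfd p]; rfl
    have h1f : HasFDerivAt (fderiv ℝ f) (fderiv ℝ (fderiv ℝ f) (φ x)) (φ x) :=
      ((hf.fderiv_right (m := 1) (by exact WithTop.coe_le_coe.mpr le_top)).differentiable one_ne_zero (φ x)).hasFDerivAt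
    have hc : HasFDerivAt (fun p => fderiv ℝ f (φ p))
        ((fderiv ℝ (fderiv ℝ f) (φ x)).comp (fderiv ℝ φ x)) x := h1f.comp x hdφ
    have hu2 := hasFDerivAt_fderiv_apply φ hφ x v
    have hP := hc.clm_apply hu2
    rw [hessian, heq2, hP.fderiv, hfd x, hess_expand, sff_expand ΓM ΓN φ hφ]
    simp only [ContinuousLinearMap.add_apply, ContinuousLinearMap.coe_comp',
      Function.comp_apply, ContinuousLinearMap.flip_apply,
      ContinuousLinearMap.apply_apply, map_add, map_sub]
    ring
  have hhessl : ∀ v', IsLinearMap ℝ (fun u' => hessian ΓN f (φ x) u' v') := by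
    intro v'
    constructor <;> intros <;>
      simp only [hess_expand, map_add, map_smul, ContinuousLinearMap.add_apply,
        ContinuousLinearMap.coe_smul', Pi.smul_apply, LinearMap.add_apply,
        LinearMap.smul_apply, smul_eq_mul] <;> ring
  have hhessr : ∀ u', IsLinearMap ℝ (fun v' => hessian ΓN f (φ x) u' v') := by
    intro u'
    constructor <;> intros <;>
      simp only [hess_expand, map_add, map_smul, smul_eq_mul] <;> ring
  have hconf2 : ∑ i, hessian ΓN f (φ x) (fderiv ℝ φ x (e i x)) (fderiv ℝ φ x (e i x))
      = Λ x • ∑ j, hessian ΓN f (φ x) (ε j (φ x)) (ε j (φ x)) :=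
    conf_sum h hhs hhp (φ x) (fun j => ε j (φ x)) (hε (φ x))
      (fun i => fderiv ℝ φ x (e i x)) (Λ x)
      (fun j j' => by rw [hΛ x (ε j (φ x)) (ε j' (φ x)), hε (φ x) j j'])
      (fun u v => hessian ΓN f (φ x) u v) hhessl hhessr
  calc lap ΓM e (f ∘ φ) x
      = ∑ i, (hessian ΓN f (φ x) (fderiv ℝ φ x (e i x)) (fderiv ℝ φ x (e i x))
          + fderiv ℝ f (φ x) (sff ΓM ΓN φ x (e i x) (e i x))) :=
        Finset.sum_congr rfl fun i _ => hcomp (e i x) (e i x)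
    _ = (∑ i, hessian ΓN f (φ x) (fderiv ℝ φ x (e i x)) (fderiv ℝ φ x (e i x)))
          + fderiv ℝ f (φ x) (∑ i, sff ΓM ΓN φ x (e i x) (e i x)) := by
        rw [Finset.sum_add_distrib, map_sum]
    _ = 0 := by
        have hT0 : (∑ i, sff ΓM ΓN φ x (e i x) (e i x)) = 0 := key x
        rw [hconf2, hT0, map_zero, add_zero]
        have hL : (∑ j, hessian ΓN f (φ x) (ε j (φ x)) (ε j (φ x))) = lap ΓN ε f (φ x) := rfl
        rw [hL, hlap (φ x), smul_zero]
end
end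

section
/- Let (M,c,D) be a three-dimensional Weyl space with Ricci tensor Ric, and let F be a one-dimensional null foliation of M by geodesics of D. Choose a local frame {U, Y, Ỹ} with Y a section of F, D_Y Y = 0, and g = U⊙U + 2 Y⊙Ỹ a local representative of c. Then Ric(Y,Y) = Y(g(D_U U, Y)) − g(D_U U, Y)². -/
set_option maxHeartbeats 1000000
noncomputable section
open scoped BigOperators

def ee {n : ℕ} (i : Fin n) : Pt n := EuclideanSpace.single i 1

variable {n : ℕ} {F : Type*} [NormedAddCommGroup F] [NormedSpace ℝ F]

lemma sum_ee (v : Pt n) : ∑ i, v i • (ee i : Pt n) = v := by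
  ext j; rw [WithLp.ofLp_sum, Finset.sum_apply]; simp [ee, EuclideanSpace.single_apply]

lemma bi_expand (L : Pt n →ₗ[ℝ] Pt n →ₗ[ℝ] F) (v w : Pt n) :
    L v w = ∑ i, ∑ j, (v i * w j) • L (ee i) (ee j) := by
  have h1 : L v = ∑ i, v i • L (ee i) := by
    conv_lhs => rw [← sum_ee v]
    rw [map_sum]; simp [map_smul]
  rw [h1, LinearMap.sum_apply]
  refine Finset.sum_congr rfl fun i _ => ?_
  rw [LinearMap.smul_apply]
  have h2 : L (ee i) w = ∑ j, w j • L (ee i) (ee j) := by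
    conv_lhs => rw [← sum_ee w]
    rw [map_sum]; simp [map_smul]
  rw [h2, Finset.smul_sum]
  refine Finset.sum_congr rfl fun j _ => ?_
  rw [smul_smul]

-- coordinate differentiability
lemma diffAt_coord {Z : Pt n → Pt n} {x : Pt n} (hZ : DifferentiableAt ℝ Z x) (i : Fin n) :
    DifferentiableAt ℝ (fun p => Z p i) x :=
  (EuclideanSpace.proj (𝕜 := ℝ) i).differentiableAt.comp x hZ

lemma fderiv_coord {Z : Pt n → Pt n} {x : Pt n} (hZ : DifferentiableAt ℝ Z x) (i : Fin n)
    (u : Pt n) : fderiv ℝ (fun p => Z p i) x u = fderiv ℝ Z x u i := by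
  have := ((EuclideanSpace.proj (𝕜 := ℝ) i).hasFDerivAt.comp x hZ.hasFDerivAt).fderiv
  rw [show (fun p => Z p i) = (EuclideanSpace.proj (𝕜 := ℝ) i) ∘ Z from rfl, this]
  rfl

variable (T : Pt n → Pt n →ₗ[ℝ] Pt n →ₗ[ℝ] F)

lemma biApply_eq (Z W : Pt n → Pt n) :
    (fun p => T p (Z p) (W p))
      = fun p => ∑ i, ∑ j, (Z p i * W p j) • T p (ee i) (ee j) :=
  funext fun p => bi_expand (T p) (Z p) (W p)

lemma biApply_diffAt (hT : ∀ v w : Pt n, ContDiff ℝ (⊤ : ℕ∞) fun p => T p v w)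
    {Z W : Pt n → Pt n} {x : Pt n}
    (hZ : DifferentiableAt ℝ Z x) (hW : DifferentiableAt ℝ W x) :
    DifferentiableAt ℝ (fun p => T p (Z p) (W p)) x := by
  rw [biApply_eq]
  apply DifferentiableAt.fun_sum; intro i _
  apply DifferentiableAt.fun_sum; intro j _
  exact ((diffAt_coord hZ i).mul (diffAt_coord hW j)).smul
    ((hT _ _).differentiable (by simp) x)

lemma biApply_contDiff (hT : ∀ v w : Pt n, ContDiff ℝ (⊤ : ℕ∞) fun p => T p v w)
    {Z W : Pt n → Pt n} (hZ : ContDiff ℝ (⊤ : ℕ∞) Z) (hW : ContDiff ℝ (⊤ : ℕ∞) W) :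
    ContDiff ℝ (⊤ : ℕ∞) (fun p => T p (Z p) (W p)) := by
  rw [biApply_eq]
  apply ContDiff.sum; intro i _
  apply ContDiff.sum; intro j _
  exact ((contDiff_euclidean.mp hZ i).mul (contDiff_euclidean.mp hW j)).smul (hT _ _)

lemma Dop_expand (hT : ∀ v w : Pt n, ContDiff ℝ (⊤ : ℕ∞) fun p => T p v w)
    (v w x u : Pt n) :
    fderiv ℝ (fun p => T p v w) x u
      = ∑ i, ∑ j, (v i * w j) • fderiv ℝ (fun p => T p (ee i) (ee j)) x u := by
  have hfun : (fun p => T p v w)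
      = fun p => ∑ i, ∑ j, (v i * w j) • T p (ee i) (ee j) :=
    funext fun p => bi_expand (T p) v w
  rw [hfun, fderiv_fun_sum (fun i _ => by
    exact DifferentiableAt.fun_sum fun j _ =>
      ((hT _ _).differentiable (by simp) x).fun_const_smul _)]
  rw [ContinuousLinearMap.sum_apply]
  refine Finset.sum_congr rfl fun i _ => ?_
  rw [fderiv_fun_sum (fun j _ => ((hT _ _).differentiable (by simp) x).fun_const_smul _),
    ContinuousLinearMap.sum_apply]
  refine Finset.sum_congr rfl fun j _ => ?_
  rw [fderiv_fun_const_smul ((hT _ _).differentiable (by simp) x)]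
  rfl

lemma biApply_fderiv (hT : ∀ v w : Pt n, ContDiff ℝ (⊤ : ℕ∞) fun p => T p v w)
    {Z W : Pt n → Pt n} {x : Pt n}
    (hZ : DifferentiableAt ℝ Z x) (hW : DifferentiableAt ℝ W x) (u : Pt n) :
    fderiv ℝ (fun p => T p (Z p) (W p)) x u
      = fderiv ℝ (fun p => T p (Z x) (W x)) x u
        + T x (fderiv ℝ Z x u) (W x) + T x (Z x) (fderiv ℝ W x u) := by
  have key : ∀ i j : Fin n,
      fderiv ℝ (fun p => (Z p i * W p j) • T p (ee i) (ee j)) x u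
        = (fderiv ℝ Z x u i * W x j) • T x (ee i) (ee j)
          + (Z x i * fderiv ℝ W x u j) • T x (ee i) (ee j)
          + (Z x i * W x j) • fderiv ℝ (fun p => T p (ee i) (ee j)) x u := by
    intro i j
    have hz := diffAt_coord hZ i
    have hw := diffAt_coord hW j
    have hv := (hT (ee i) (ee j)).differentiable (by simp) x
    rw [fderiv_fun_smul (hz.fun_mul hw) hv]
    rw [ContinuousLinearMap.add_apply, ContinuousLinearMap.smul_apply,
      ContinuousLinearMap.smulRight_apply, fderiv_fun_mul hz hw,
      ContinuousLinearMap.add_apply, ContinuousLinearMap.smul_apply,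
      ContinuousLinearMap.smul_apply, fderiv_coord hZ i, fderiv_coord hW j]
    simp only [smul_eq_mul]
    rw [add_smul, mul_comm (W x j)]
    abel
  rw [biApply_eq, fderiv_fun_sum (fun i _ => DifferentiableAt.fun_sum fun j _ =>
      ((diffAt_coord hZ i).fun_mul (diffAt_coord hW j)).fun_smul
        ((hT _ _).differentiable (by simp) x)),
    ContinuousLinearMap.sum_apply]
  have : ∀ i : Fin n,
      fderiv ℝ (fun p => ∑ j, (Z p i * W p j) • T p (ee i) (ee j)) x u
        = ∑ j, fderiv ℝ (fun p => (Z p i * W p j) • T p (ee i) (ee j)) x u := by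
    intro i
    rw [fderiv_fun_sum (fun j _ =>
      ((diffAt_coord hZ i).fun_mul (diffAt_coord hW j)).fun_smul
        ((hT _ _).differentiable (by simp) x)), ContinuousLinearMap.sum_apply]
  simp only [this, key]
  rw [Dop_expand T hT (Z x) (W x) x u,
    bi_expand (T x) (fderiv ℝ Z x u) (W x), bi_expand (T x) (Z x) (fderiv ℝ W x u)]
  simp only [Finset.sum_add_distrib]
  ring_nf
  abel


section Main
variable {n : ℕ} (g : Met n) (Γ : Conn n) (α : Pt n → Pt n → ℝ)

lemma met_deriv (hgsm : ∀ v w : Pt n, ContDiff ℝ (⊤ : ℕ∞) fun x => g x v w)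
    (hWeyl : ∀ x u v w, covMet g Γ x u v w = -2 * α x u * g x v w)
    {Z W : Pt n → Pt n} {q : Pt n}
    (hZ : DifferentiableAt ℝ Z q) (hWd : DifferentiableAt ℝ W q) (u : Pt n) :
    fderiv ℝ (fun p => g p (Z p) (W p)) q u
      = -2 * α q u * g q (Z q) (W q)
        + g q (fderiv ℝ Z q u + Γ q u (Z q)) (W q)
        + g q (Z q) (fderiv ℝ W q u + Γ q u (W q)) := by
  have hw := hWeyl q u (Z q) (W q)
  unfold covMet at hw
  have hfix : fderiv ℝ (fun p => g p (Z q) (W q)) q u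
      = -2 * α q u * g q (Z q) (W q) + g q (Γ q u (Z q)) (W q) + g q (Z q) (Γ q u (W q)) := by
    linarith [hw]
  rw [biApply_fderiv g hgsm hZ hWd u, hfix]
  simp only [map_add, LinearMap.add_apply]
  ring

lemma covVF_contDiff (hΓsm : ∀ v w : Pt n, ContDiff ℝ (⊤ : ℕ∞) fun x => Γ x v w)
    {X Z : Pt n → Pt n} (hX : ContDiff ℝ (⊤ : ℕ∞) X) (hZ : ContDiff ℝ (⊤ : ℕ∞) Z) :
    ContDiff ℝ (⊤ : ℕ∞) (covVF Γ X Z) := by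
  unfold covVF
  exact ((hZ.fderiv_right (by simp)).clm_apply hX).add (biApply_contDiff Γ hΓsm hX hZ)

lemma curv_tensorial (hΓsm : ∀ v w : Pt n, ContDiff ℝ (⊤ : ℕ∞) fun x => Γ x v w)
    {X V W : Pt n → Pt n} (hX : ContDiff ℝ (⊤ : ℕ∞) X) (hV : ContDiff ℝ (⊤ : ℕ∞) V)
    (hWs : ContDiff ℝ (⊤ : ℕ∞) W) (q : Pt n) :
    curv Γ q (X q) (V q) (W q)
      = covVF Γ X (covVF Γ V W) q - covVF Γ V (covVF Γ X W) q
        - covVF Γ (lieB X V) W q := by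
  have hXd := hX.differentiable (by simp)
  have hVd := hV.differentiable (by simp)
  have hWdd := hWs.differentiable (by simp)
  have hW' : Differentiable ℝ (fderiv ℝ W) := (hWs.fderiv_right (m := (⊤ : ℕ∞)) (by simp)).differentiable (by simp)
  -- derivative of a covVF field
  have key : ∀ (A B : Pt n → Pt n), ContDiff ℝ (⊤ : ℕ∞) A → ContDiff ℝ (⊤ : ℕ∞) B → ∀ u,
      fderiv ℝ (covVF Γ A B) q u
        = fderiv ℝ (fderiv ℝ B) q u (A q) + fderiv ℝ B q (fderiv ℝ A q u)
          + (fderiv ℝ (fun p => Γ p (A q) (B q)) q u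
             + Γ q (fderiv ℝ A q u) (B q) + Γ q (A q) (fderiv ℝ B q u)) := by
    intro A B hA hB u
    have hAd := hA.differentiable (by simp)
    have hBd := hB.differentiable (by simp)
    have hB' : Differentiable ℝ (fderiv ℝ B) := (hB.fderiv_right (m := (⊤ : ℕ∞)) (by simp)).differentiable (by simp)
    have d1 : DifferentiableAt ℝ (fun p => fderiv ℝ B p (A p)) q :=
      (hB' q).clm_apply (hAd q)
    have d2 : DifferentiableAt ℝ (fun p => Γ p (A p) (B p)) q :=
      biApply_diffAt Γ hΓsm (hAd q) (hBd q)
    have : covVF Γ A B = fun p => fderiv ℝ B p (A p) + Γ p (A p) (B p) := rfl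
    rw [this, fderiv_fun_add d1 d2, ContinuousLinearMap.add_apply,
      fderiv_clm_apply (hB' q) (hAd q), biApply_fderiv Γ hΓsm (hAd q) (hBd q) u]
    simp only [ContinuousLinearMap.add_apply, ContinuousLinearMap.comp_apply,
      ContinuousLinearMap.flip_apply]
    abel
  have hsymm : ∀ u v : Pt n, fderiv ℝ (fderiv ℝ W) q u v = fderiv ℝ (fderiv ℝ W) q v u :=
    second_derivative_symmetric (fun y => (hWdd y).hasFDerivAt) ((hW' q).hasFDerivAt)
  have e1 : covVF Γ X (covVF Γ V W) q
      = fderiv ℝ (covVF Γ V W) q (X q) + Γ q (X q) (covVF Γ V W q) := rfl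
  have e2 : covVF Γ V (covVF Γ X W) q
      = fderiv ℝ (covVF Γ X W) q (V q) + Γ q (V q) (covVF Γ X W q) := rfl
  have e3 : covVF Γ (lieB X V) W q
      = fderiv ℝ W q (lieB X V q) + Γ q (lieB X V q) (W q) := rfl
  rw [e1, e2, e3, key V W hV hWs (X q), key X W hX hWs (V q)]
  have elieB : lieB X V q = fderiv ℝ V q (X q) - fderiv ℝ X q (V q) := rfl
  have ecov1 : covVF Γ V W q = fderiv ℝ W q (V q) + Γ q (V q) (W q) := rfl
  have ecov2 : covVF Γ X W q = fderiv ℝ W q (X q) + Γ q (X q) (W q) := rfl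
  rw [elieB, ecov1, ecov2, hsymm (X q) (V q)]
  simp only [map_add, map_sub, LinearMap.add_apply, LinearMap.sub_apply, curv]
  abel

end Main

/-- Ricci identity on a 3-dimensional Weyl space along a foliation by null geodesics:
in a frame `{U, Y, Ỹ}` with `g = U⊙U + 2 Y⊙Ỹ`, `Y` null geodesic,
`Ric(Y,Y) = Y(g(D_U U, Y)) − g(D_U U, Y)²`. -/
theorem stmt17
    (g : Met 3) (hgs : MetSymm g)
    (hgsm : ∀ v w : Pt 3, ContDiff ℝ (⊤ : ℕ∞) fun x => g x v w)
    (Γ : Conn 3) (α : Pt 3 → Pt 3 → ℝ) (hW : IsWeyl g Γ α)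
    (hΓsm : ∀ v w : Pt 3, ContDiff ℝ (⊤ : ℕ∞) fun x => Γ x v w)
    (U Y Yt : Pt 3 → Pt 3)
    (hU : ContDiff ℝ (⊤ : ℕ∞) U) (hY : ContDiff ℝ (⊤ : ℕ∞) Y) (hYt : ContDiff ℝ (⊤ : ℕ∞) Yt)
    (f1 : ∀ x, g x (U x) (U x) = 1) (f2 : ∀ x, g x (Y x) (Yt x) = 1)
    (f3 : ∀ x, g x (U x) (Y x) = 0) (f4 : ∀ x, g x (U x) (Yt x) = 0)
    (f5 : ∀ x, g x (Y x) (Y x) = 0) (f6 : ∀ x, g x (Yt x) (Yt x) = 0)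
    (hspan : ∀ x u, u = g x u (U x) • U x + g x u (Yt x) • Y x + g x u (Y x) • Yt x)
    (hgeo : ∀ x, covVF Γ Y Y x = 0) :
    ∀ x, ricci Γ x (Y x) (Y x)
      = fderiv ℝ (fun p => g p (covVF Γ U U p) (Y p)) x (Y x)
        - (g x (covVF Γ U U x) (Y x)) ^ 2 := by
  obtain ⟨hTF, hWeyl⟩ := hW
  have hUd := hU.differentiable (by simp)
  have hYd := hY.differentiable (by simp)
  have hYtd := hYt.differentiable (by simp)
  have hZsm : ContDiff ℝ (⊤ : ℕ∞) (covVF Γ U Y) := covVF_contDiff Γ hΓsm hU hY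
  have hVsm : ContDiff ℝ (⊤ : ℕ∞) (covVF Γ Y U) := covVF_contDiff Γ hΓsm hY hU
  have hQsm : ContDiff ℝ (⊤ : ℕ∞) (covVF Γ Yt Y) := covVF_contDiff Γ hΓsm hYt hY
  have hUUsm : ContDiff ℝ (⊤ : ℕ∞) (covVF Γ U U) := covVF_contDiff Γ hΓsm hU hU
  -- pointwise consequences of metric compatibility
  have P1 : ∀ q u, g q (fderiv ℝ Y q u + Γ q u (Y q)) (Y q) = 0 := by
    intro q u
    have hm := met_deriv g Γ α hgsm hWeyl (hYd q) (hYd q) u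
    rw [show (fun p => g p (Y p) (Y p)) = fun _ => (0:ℝ) from funext f5] at hm
    rw [fderiv_fun_const] at hm
    simp only [Pi.zero_apply, ContinuousLinearMap.zero_apply] at hm
    rw [f5 q] at hm
    have hsym := hgs q (Y q) (fderiv ℝ Y q u + Γ q u (Y q))
    linarith
  have P3 : ∀ q u, g q (fderiv ℝ U q u + Γ q u (U q)) (Y q)
      + g q (U q) (fderiv ℝ Y q u + Γ q u (Y q)) = 0 := by
    intro q u
    have hm := met_deriv g Γ α hgsm hWeyl (hUd q) (hYd q) u
    rw [show (fun p => g p (U p) (Y p)) = fun _ => (0:ℝ) from funext f3] at hm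
    rw [fderiv_fun_const] at hm
    simp only [Pi.zero_apply, ContinuousLinearMap.zero_apply] at hm
    rw [f3 q] at hm
    linarith
  have PU : ∀ q u, g q (fderiv ℝ U q u + Γ q u (U q)) (U q) = α q u := by
    intro q u
    have hm := met_deriv g Γ α hgsm hWeyl (hUd q) (hUd q) u
    rw [show (fun p => g p (U p) (U p)) = fun _ => (1:ℝ) from funext f1] at hm
    rw [fderiv_fun_const] at hm
    simp only [Pi.zero_apply, ContinuousLinearMap.zero_apply] at hm
    rw [f1 q] at hm
    have hsym := hgs q (U q) (fderiv ℝ U q u + Γ q u (U q))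
    linarith
  -- the key coefficient function identity
  have haZ : ∀ p, g p (covVF Γ U Y p) (U p) = -(g p (covVF Γ U U p) (Y p)) := by
    intro p
    have h := P3 p (U p)
    have hsym := hgs p (U p) (fderiv ℝ Y p (U p) + Γ p (U p) (Y p))
    show g p (fderiv ℝ Y p (U p) + Γ p (U p) (Y p)) (U p)
      = -(g p (fderiv ℝ U p (U p) + Γ p (U p) (U p)) (Y p))
    linarith
  intro x
  set ax : ℝ := g x (covVF Γ U U x) (Y x) with hax
  set aY : ℝ := α x (Y x) with haY
  -- frame expansions
  have hZx : covVF Γ U Y x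
      = (-ax) • U x + (g x (covVF Γ U Y x) (Yt x)) • Y x := by
    have h := hspan x (covVF Γ U Y x)
    have hz : g x (covVF Γ U Y x) (Y x) = 0 := P1 x (U x)
    rw [hz, zero_smul, add_zero, haZ x, ← hax] at h
    exact h
  have hVx : covVF Γ Y U x
      = aY • U x + (g x (covVF Γ Y U x) (Yt x)) • Y x := by
    have h := hspan x (covVF Γ Y U x)
    have h2 : fderiv ℝ Y x (Y x) + Γ x (Y x) (Y x) = 0 := hgeo x
    have h3 := P3 x (Y x)
    rw [h2] at h3
    have hz : g x (covVF Γ Y U x) (Y x) = 0 := by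
      have : g x (U x) (0 : Pt 3) = 0 := by simp
      show g x (fderiv ℝ U x (Y x) + Γ x (Y x) (U x)) (Y x) = 0
      linarith
    have hu : g x (covVF Γ Y U x) (U x) = aY := PU x (Y x)
    rw [hz, zero_smul, add_zero, hu] at h
    exact h
  -- pairing of the two covariant derivative fields
  have hgZV : g x (covVF Γ U Y x) (covVF Γ Y U x) = -ax * aY := by
    rw [hZx, hVx]
    simp only [map_add, map_smul, LinearMap.add_apply, LinearMap.smul_apply, smul_eq_mul]
    rw [hgs x (Y x) (U x), f1 x, f3 x, f5 x]
    ring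
  -- linearity of curvature in its first argument
  have hDadd : ∀ (u₁ u₂ w v : Pt 3), fderiv ℝ (fun p => Γ p (u₁ + u₂) w) x v
      = fderiv ℝ (fun p => Γ p u₁ w) x v + fderiv ℝ (fun p => Γ p u₂ w) x v := by
    intro u₁ u₂ w v
    have he : (fun p => Γ p (u₁ + u₂) w) = fun p => Γ p u₁ w + Γ p u₂ w := by
      funext p; rw [map_add]; rfl
    rw [he, fderiv_fun_add ((hΓsm u₁ w).differentiable (by simp) x)
      ((hΓsm u₂ w).differentiable (by simp) x), ContinuousLinearMap.add_apply]
  have hDsmul : ∀ (r : ℝ) (u w v : Pt 3), fderiv ℝ (fun p => Γ p (r • u) w) x v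
      = r • fderiv ℝ (fun p => Γ p u w) x v := by
    intro r u w v
    have he : (fun p => Γ p (r • u) w) = fun p => r • Γ p u w := by
      funext p; rw [map_smul]; rfl
    rw [he, fderiv_fun_const_smul ((hΓsm u w).differentiable (by simp) x) r]
    rfl
  have hRadd : ∀ u₁ u₂ : Pt 3, curv Γ x (u₁ + u₂) (Y x) (Y x)
      = curv Γ x u₁ (Y x) (Y x) + curv Γ x u₂ (Y x) (Y x) := by
    intro u₁ u₂
    simp only [curv]
    rw [hDadd u₁ u₂ (Y x) (Y x)]
    simp only [map_add, LinearMap.add_apply, ContinuousLinearMap.map_add]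
    abel
  have hRsmul : ∀ (r : ℝ) (u : Pt 3), curv Γ x (r • u) (Y x) (Y x)
      = r • curv Γ x u (Y x) (Y x) := by
    intro r u
    simp only [curv]
    rw [hDsmul r u (Y x) (Y x)]
    simp only [map_smul, LinearMap.smul_apply, ContinuousLinearMap.map_smul]
    module
  have hpair : ∀ w u : Pt 3,
      ∑ i, g x (ee i) u * (inner ℝ w (EuclideanSpace.single i (1:ℝ)) : ℝ) = g x w u := by
    intro w u
    have hin : ∀ i : Fin 3, (inner ℝ w (EuclideanSpace.single i (1:ℝ)) : ℝ) = w i := by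
      intro i; simp [EuclideanSpace.inner_single_right]
    simp only [hin]
    conv_rhs => rw [← sum_ee w]
    rw [map_sum, LinearMap.sum_apply]
    refine Finset.sum_congr rfl fun i _ => ?_
    rw [map_smul, LinearMap.smul_apply, smul_eq_mul, mul_comm]
  have hTr : ricci Γ x (Y x) (Y x)
      = g x (curv Γ x (U x) (Y x) (Y x)) (U x)
        + g x (curv Γ x (Y x) (Y x) (Y x)) (Yt x)
        + g x (curv Γ x (Yt x) (Y x) (Y x)) (Y x) := by
    unfold ricci
    have hei : ∀ i : Fin 3, curv Γ x (EuclideanSpace.single i (1:ℝ)) (Y x) (Y x)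
        = g x (ee i) (U x) • curv Γ x (U x) (Y x) (Y x)
          + g x (ee i) (Yt x) • curv Γ x (Y x) (Y x) (Y x)
          + g x (ee i) (Y x) • curv Γ x (Yt x) (Y x) (Y x) := by
      intro i
      conv_lhs => rw [show (EuclideanSpace.single i (1:ℝ))
        = g x (ee i) (U x) • U x + g x (ee i) (Yt x) • Y x + g x (ee i) (Y x) • Yt x
        from hspan x (ee i)]
      rw [hRadd, hRadd, hRsmul, hRsmul, hRsmul]
    simp only [hei, inner_add_left, real_inner_smul_left]
    rw [Finset.sum_add_distrib, Finset.sum_add_distrib, hpair, hpair, hpair]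
  have hYYfun : covVF Γ Y Y = fun _ => (0 : Pt 3) := funext hgeo
  have hcov0 : ∀ X0 : Pt 3 → Pt 3, covVF Γ X0 (fun _ => (0 : Pt 3)) x = 0 := by
    intro X0
    show fderiv ℝ (fun _ => (0:Pt 3)) x (X0 x) + Γ x (X0 x) (0:Pt 3) = 0
    rw [fderiv_fun_const]
    simp
  have hRY0 : curv Γ x (Y x) (Y x) (Y x) = 0 := by
    simp only [curv]; abel
  have hterm3 : g x (curv Γ x (Yt x) (Y x) (Y x)) (Y x) = 0 := by
    rw [curv_tensorial Γ hΓsm hYt hY hY x, hYYfun, hcov0 Yt]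
    have hQY : ∀ p, g p (covVF Γ Yt Y p) (Y p) = 0 := fun p => P1 p (Yt p)
    have hA : g x (covVF Γ Y (covVF Γ Yt Y) x) (Y x) = 0 := by
      have hm := met_deriv g Γ α hgsm hWeyl
        ((hQsm.differentiable (by simp)) x) (hYd x) (Y x)
      rw [show (fun p => g p (covVF Γ Yt Y p) (Y p)) = fun _ => (0:ℝ)
        from funext hQY] at hm
      rw [fderiv_fun_const] at hm
      simp only [Pi.zero_apply, ContinuousLinearMap.zero_apply] at hm
      rw [hQY x] at hm
      have h2 : fderiv ℝ Y x (Y x) + Γ x (Y x) (Y x) = 0 := hgeo x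
      rw [h2] at hm
      simp only [map_zero] at hm
      show g x (fderiv ℝ (covVF Γ Yt Y) x (Y x) + Γ x (Y x) (covVF Γ Yt Y x)) (Y x) = 0
      linarith
    have hB : g x (covVF Γ (lieB Yt Y) Y x) (Y x) = 0 := P1 x (lieB Yt Y x)
    simp only [zero_sub, map_neg, map_sub, LinearMap.neg_apply, LinearMap.sub_apply]
    rw [hA, hB]
    ring
  have hterm2 : g x (curv Γ x (Y x) (Y x) (Y x)) (Yt x) = 0 := by
    rw [hRY0]
    simp
  have hterm1 : g x (curv Γ x (U x) (Y x) (Y x)) (U x)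
      = fderiv ℝ (fun p => g p (covVF Γ U U p) (Y p)) x (Y x) - ax ^ 2 := by
    rw [curv_tensorial Γ hΓsm hU hY hY x, hYYfun, hcov0 U]
    have hA : g x (covVF Γ Y (covVF Γ U Y) x) (U x)
        = -(fderiv ℝ (fun p => g p (covVF Γ U U p) (Y p)) x (Y x)) - aY * ax := by
      have hm := met_deriv g Γ α hgsm hWeyl
        ((hZsm.differentiable (by simp)) x) (hUd x) (Y x)
      rw [show (fun p => g p (covVF Γ U Y p) (U p))
          = fun p => -(g p (covVF Γ U U p) (Y p)) from funext haZ] at hm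
      rw [fderiv_fun_neg, ContinuousLinearMap.neg_apply] at hm
      rw [haZ x, ← hax] at hm
      have h3 : g x (covVF Γ U Y x) (fderiv ℝ U x (Y x) + Γ x (Y x) (U x)) = -ax * aY := hgZV
      rw [h3, ← haY] at hm
      show g x (fderiv ℝ (covVF Γ U Y) x (Y x) + Γ x (Y x) (covVF Γ U Y x)) (U x) = _
      linarith
    have hlb : lieB U Y x = covVF Γ U Y x - covVF Γ Y U x := by
      show fderiv ℝ Y x (U x) - fderiv ℝ U x (Y x)
        = (fderiv ℝ Y x (U x) + Γ x (U x) (Y x)) - (fderiv ℝ U x (Y x) + Γ x (Y x) (U x))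
      rw [hTF x (Y x) (U x)]
      abel
    have hB : g x (covVF Γ (lieB U Y) Y x) (U x) = ax ^ 2 + ax * aY := by
      have elb : lieB U Y x
          = (-ax - aY) • U x
            + (g x (covVF Γ U Y x) (Yt x) - g x (covVF Γ Y U x) (Yt x)) • Y x := by
        rw [hlb]
        conv_lhs => rw [hZx, hVx]
        module
      have hcomb : ∀ r s : ℝ,
          fderiv ℝ Y x (r • U x + s • Y x) + Γ x (r • U x + s • Y x) (Y x)
            = r • (fderiv ℝ Y x (U x) + Γ x (U x) (Y x))
              + s • (fderiv ℝ Y x (Y x) + Γ x (Y x) (Y x)) := by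
        intro r s
        simp only [ContinuousLinearMap.map_add, ContinuousLinearMap.map_smul,
          map_add, map_smul, LinearMap.add_apply, LinearMap.smul_apply]
        module
      have hgeo' : fderiv ℝ Y x (Y x) + Γ x (Y x) (Y x) = 0 := hgeo x
      have hZU : g x (fderiv ℝ Y x (U x) + Γ x (U x) (Y x)) (U x) = -ax := by
        have := haZ x
        rw [← hax] at this
        exact this
      show g x (fderiv ℝ Y x (lieB U Y x) + Γ x (lieB U Y x) (Y x)) (U x) = ax ^ 2 + ax * aY
      rw [elb, hcomb, hgeo', smul_zero, add_zero, map_smul, LinearMap.smul_apply,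
        smul_eq_mul, hZU]
      ring
    simp only [zero_sub, map_neg, map_sub, LinearMap.neg_apply, LinearMap.sub_apply]
    rw [hA, hB]
    ring
  rw [hTr, hterm1, hterm2, hterm3]
  ring
end
end
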